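/- arXiv:1611.10299 — 8 statements merged into one kernel-verified Lean document; each statement's English description precedes it below -/
import Mathlib

section
/- Let G = (V, E) be a finite simple graph containing two non-adjacent vertices u and v with N(u) ∩ N(v) = ∅ and {u, v} ∪ N(u) ∪ N(v) ≠ V. Then the 2-colouring φ of E that colours every edge incident to u or to v red and all other edges blue does not satisfy φ → Π₂; in particular G does not satisfy G → Π₂. -/
/-!
A monochromatic tree through `u` stays inside `{u} ∪ N(u)`: a blue one cannot leave `u`, because
every edge at `u` is red, and a red one cannot leave `{u} ∪ N(u)`, because a red edge leaving a
neighbour `a` of `u` ends at `v`, making `a` a common neighbour. The same holds for `v`. A vertex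
outside `{u, v} ∪ N(u) ∪ N(v)` therefore lies in a tree containing neither `u` nor `v`, so the
other tree contains both, which is impossible since `v ∉ {u} ∪ N(u)`.
-/

open MeasureTheory Filter Topology SimpleGraph

namespace MonochromaticTrees

variable {V : Type*} {C : Type*}

/-- A subgraph `T` of `G` is a *monochromatic tree* with respect to the
edge-colouring `φ` if it is either empty or a tree, and all of its edges
receive the same colour under `φ`. -/
def IsMonoTree (G : SimpleGraph V) (φ : Sym2 V → C) (T : G.Subgraph) : Prop :=
  (T.verts = ∅ ∨ T.coe.IsTree) ∧ ∃ c : C, ∀ e ∈ T.edgeSet, φ e = c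

/-- `φ → Π₂`: the vertex set can be partitioned into the vertex sets of two
monochromatic trees. -/
def MonoTreePartition2 (G : SimpleGraph V) (φ : Sym2 V → Bool) : Prop :=
  ∃ T₁ T₂ : G.Subgraph, IsMonoTree G φ T₁ ∧ IsMonoTree G φ T₂ ∧
    Disjoint T₁.verts T₂.verts ∧ T₁.verts ∪ T₂.verts = Set.univ

/-- `G → Π₂`: every 2-colouring of the edges admits a partition of the vertex
set into the vertex sets of two monochromatic trees. -/
def ArrowPi2 (G : SimpleGraph V) : Prop :=
  ∀ φ : Sym2 V → Bool, MonoTreePartition2 G φ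

/-- Partition of the vertex set into the vertex sets of `r` monochromatic
trees for an `r`-colouring `φ`. -/
def MonoTreePartitionR (G : SimpleGraph V) (r : ℕ) (φ : Sym2 V → Fin r) : Prop :=
  ∃ T : Fin r → G.Subgraph, (∀ i, IsMonoTree G φ (T i)) ∧
    (Set.univ.PairwiseDisjoint fun i => (T i).verts) ∧ (⋃ i, (T i).verts) = Set.univ

/-- `G → Π_r`. -/
def ArrowPiR (G : SimpleGraph V) (r : ℕ) : Prop :=
  ∀ φ : Sym2 V → Fin r, MonoTreePartitionR G r φ

/-- There is a monochromatic `u`–`v` path. -/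
def MonoPath (G : SimpleGraph V) (φ : Sym2 V → C) (u v : V) : Prop :=
  ∃ w : G.Walk u v, w.IsPath ∧ ∃ c : C, ∀ e ∈ w.edges, φ e = c

/-- The spanning subgraph of `G` consisting of the edges of colour `c`. -/
def colourGraph (G : SimpleGraph V) (φ : Sym2 V → Bool) (c : Bool) : SimpleGraph V :=
  SimpleGraph.fromEdgeSet {e | e ∈ G.edgeSet ∧ φ e = c}

/-- The set `R^φ` (for `c = true`, i.e. red) resp. `B^φ` (for `c = false`,
i.e. blue) of vertices `v` with `d_c(v) > d(v)/3`. -/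
def bigColourSet (G : SimpleGraph V) (φ : Sym2 V → Bool) (c : Bool) : Set V :=
  {v | (G.neighborSet v).ncard < 3 * ((colourGraph G φ c).neighborSet v).ncard}

/-- A colouring is extremal if there are distinct `r ∈ R^φ`, `b ∈ B^φ` with no
monochromatic `r`–`b` path. -/
def Extremal (G : SimpleGraph V) (φ : Sym2 V → Bool) : Prop :=
  ∃ r ∈ bigColourSet G φ true, ∃ b ∈ bigColourSet G φ false,
    r ≠ b ∧ ¬ MonoPath G φ r b

/-- The number of edges of `G` with one endpoint in `U` and the other in `W`. -/
noncomputable def edgesBetween (G : SimpleGraph V) (U W : Set V) : ℕ :=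
  {e ∈ G.edgeSet | ∃ u ∈ U, ∃ w ∈ W, e = s(u, w)}.ncard

/-- The number of edges of `G` with both endpoints in `A`. -/
noncomputable def edgesWithin (G : SimpleGraph V) (A : Set V) : ℕ :=
  {e ∈ G.edgeSet | ∀ v ∈ e, v ∈ A}.ncard

/-- The distribution of the binomial random graph `G(n,p)`: each potential
edge appears independently with probability `p`. -/
noncomputable def gnp (n : ℕ) (p : ℝ) : Measure (Sym2 (Fin n) → Bool) :=
  Measure.pi fun _ => (PMF.bernoulli (min (Real.toNNReal p) 1) (min_le_right _ _)).toMeasure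

/-- The graph encoded by an outcome `ω` of the edge indicators. -/
def graphOf {n : ℕ} (ω : Sym2 (Fin n) → Bool) : SimpleGraph (Fin n) :=
  SimpleGraph.fromEdgeSet {e | ω e = true}

section

variable {G : SimpleGraph V}

lemma _root_.SimpleGraph.Reachable.mem_of_forall_adj_mem {S : Set V}
    (hS : ∀ x ∈ S, ∀ y, G.Adj x y → y ∈ S) {x y : V} (h : G.Reachable x y) (hx : x ∈ S) :
    y ∈ S :=
  h.mem_subgraphVerts (H := (⊤ : G.Subgraph).induce S)
    (fun a ha b hab => ⟨ha, hS a ha b hab, hab⟩) hx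

lemma _root_.SimpleGraph.Subgraph.Preconnected.reachable_of_forall_adj {H : SimpleGraph V}
    {T : G.Subgraph} (hT : T.Preconnected) (hH : ∀ x y, T.Adj x y → H.Adj x y) {x y : V}
    (hx : x ∈ T.verts) (hy : y ∈ T.verts) : H.Reachable x y :=
  (hT ⟨x, hx⟩ ⟨y, hy⟩).map ⟨Subtype.val, fun h => hH _ _ h⟩

variable {φ : Sym2 V → Bool}

lemma IsMonoTree.exists_colourGraph_reachable {T : G.Subgraph} (hT : IsMonoTree G φ T)
    {x y : V} (hx : x ∈ T.verts) (hy : y ∈ T.verts) : ∃ c, (colourGraph G φ c).Reachable x y := by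
  obtain ⟨hempty | htree, c, hc⟩ := hT
  · simp [hempty] at hx
  refine ⟨c, Subgraph.Preconnected.reachable_of_forall_adj ⟨htree.connected.preconnected⟩
    (fun a b hab => ?_) hx hy⟩
  exact (fromEdgeSet_adj _).2 ⟨⟨hab.adj_sub, hc _ hab⟩, hab.ne⟩

lemma eq_or_adj_of_colourGraph_reachable {u v : V} (hadj : ¬ G.Adj u v)
    (hN : G.neighborSet u ∩ G.neighborSet v = ∅)
    (hured : ∀ e ∈ G.edgeSet, u ∈ e → φ e = true)
    (hred : ∀ e ∈ G.edgeSet, φ e = true → u ∈ e ∨ v ∈ e)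
    (c : Bool) {y : V} (h : (colourGraph G φ c).Reachable u y) : y = u ∨ G.Adj u y := by
  cases c
  · refine .inl (h.mem_of_forall_adj_mem (S := {u}) (fun x hx y hxy => ?_) rfl)
    obtain rfl : x = u := hx
    obtain ⟨⟨hE, hblue⟩, -⟩ := (fromEdgeSet_adj _).1 hxy
    simp [hured _ hE (Sym2.mem_mk_left _ _)] at hblue
  · refine h.mem_of_forall_adj_mem (S := {y | y = u ∨ G.Adj u y}) (fun x hx y hxy => ?_)
      (.inl rfl)
    obtain ⟨⟨hE, hφ⟩, -⟩ := (fromEdgeSet_adj _).1 hxy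
    rcases hx with rfl | hux
    · exact .inr hE
    have hvx : ¬ G.Adj v x := fun hvx => (Set.eq_empty_iff_forall_notMem.1 hN) x ⟨hux, hvx⟩
    rcases hred _ hE hφ with hu | hv
    · rcases Sym2.mem_iff.1 hu with rfl | rfl
      · exact (G.irrefl hux).elim
      · exact .inl rfl
    · rcases Sym2.mem_iff.1 hv with rfl | rfl
      · exact (hadj hux).elim
      · exact (hvx hE.symm).elim

lemma IsMonoTree.eq_or_adj {u v : V} (hadj : ¬ G.Adj u v)
    (hN : G.neighborSet u ∩ G.neighborSet v = ∅)
    (hured : ∀ e ∈ G.edgeSet, u ∈ e → φ e = true)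
    (hred : ∀ e ∈ G.edgeSet, φ e = true → u ∈ e ∨ v ∈ e)
    {T : G.Subgraph} (hT : IsMonoTree G φ T) (hu : u ∈ T.verts) {y : V} (hy : y ∈ T.verts) :
    y = u ∨ G.Adj u y :=
  have ⟨c, h⟩ := hT.exists_colourGraph_reachable hu hy
  eq_or_adj_of_colourGraph_reachable hadj hN hured hred c h

end

theorem stmt_1_general {V : Type*} (G : SimpleGraph V) (u v : V)
    (huv : u ≠ v) (hadj : ¬ G.Adj u v)
    (hN : G.neighborSet u ∩ G.neighborSet v = ∅)
    (hV : ({u, v} : Set V) ∪ G.neighborSet u ∪ G.neighborSet v ≠ Set.univ)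
    (φ : Sym2 V → Bool)
    (hred : ∀ e ∈ G.edgeSet, (u ∈ e ∨ v ∈ e) → φ e = true)
    (hblue : ∀ e ∈ G.edgeSet, ¬ (u ∈ e ∨ v ∈ e) → φ e = false) :
    ¬ MonoTreePartition2 G φ ∧ ¬ ArrowPi2 G := by
  have hred_inc (e) (he : e ∈ G.edgeSet) (hφ : φ e = true) : u ∈ e ∨ v ∈ e :=
    by_contra fun h => by simp [hblue e he h] at hφ
  have near_u {T : G.Subgraph} (hT : IsMonoTree G φ T) (hu : u ∈ T.verts) {y : V}
      (hy : y ∈ T.verts) : y = u ∨ G.Adj u y :=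
    hT.eq_or_adj hadj hN (fun e he h => hred e he (.inl h)) hred_inc hu hy
  have near_v {T : G.Subgraph} (hT : IsMonoTree G φ T) (hv : v ∈ T.verts) {y : V}
      (hy : y ∈ T.verts) : y = v ∨ G.Adj v y :=
    hT.eq_or_adj (fun h => hadj h.symm) (by rwa [Set.inter_comm])
      (fun e he h => hred e he (.inr h)) (fun e he h => (hred_inc e he h).symm) hv hy
  have hφ : ¬ MonoTreePartition2 G φ := by
    rintro ⟨T₁, T₂, h₁, h₂, -, hcover⟩
    obtain ⟨x, hx⟩ := (Set.ne_univ_iff_exists_notMem _).1 hV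
    simp only [Set.mem_union, Set.mem_insert_iff, Set.mem_singleton_iff, mem_neighborSet,
      not_or] at hx
    obtain ⟨⟨⟨hxu, hxv⟩, hux⟩, hvx⟩ := hx
    have hmem (w : V) : w ∈ T₁.verts ∨ w ∈ T₂.verts := by simp [← Set.mem_union, hcover]
    clear hcover
    wlog hx₁ : x ∈ T₁.verts generalizing T₁ T₂
    · exact this T₂ T₁ h₂ h₁ (fun w => (hmem w).symm) ((hmem x).resolve_left hx₁)
    have hu₂ : u ∈ T₂.verts := (hmem u).resolve_left fun hu => (near_u h₁ hu hx₁).elim hxu hux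
    have hv₂ : v ∈ T₂.verts := (hmem v).resolve_left fun hv => (near_v h₁ hv hx₁).elim hxv hvx
    exact (near_u h₂ hu₂ hv₂).elim huv.symm hadj
  exact ⟨hφ, fun h => hφ (h φ)⟩

/-- If `u`, `v` are non-adjacent vertices with disjoint
neighbourhoods and `{u,v} ∪ N(u) ∪ N(v) ≠ V`, then the colouring giving every
edge incident to `u` or `v` the colour red (`true`) and every other edge the
colour blue (`false`) does not satisfy `φ → Π₂`; in particular `G ↛ Π₂`. -/
theorem stmt_1 {V : Type*} [Fintype V] (G : SimpleGraph V) (u v : V)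
    (huv : u ≠ v) (hadj : ¬ G.Adj u v)
    (hN : G.neighborSet u ∩ G.neighborSet v = ∅)
    (hV : ({u, v} : Set V) ∪ G.neighborSet u ∪ G.neighborSet v ≠ Set.univ)
    (φ : Sym2 V → Bool)
    (hred : ∀ e ∈ G.edgeSet, (u ∈ e ∨ v ∈ e) → φ e = true)
    (hblue : ∀ e ∈ G.edgeSet, ¬ (u ∈ e ∨ v ∈ e) → φ e = false) :
    ¬ MonoTreePartition2 G φ ∧ ¬ ArrowPi2 G :=
  stmt_1_general G u v huv hadj hN hV φ hred hblue

end MonochromaticTrees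
end

section
/- If p = p(n) ≫ ((log n)/n)^{1/2}, then asymptotically almost surely G ∈ G(n,p) satisfies: for every vertex v ∈ V(G) and all disjoint subsets U ⊆ V(G) and W ⊆ N_G(v) with |U| ≥ 100/p and |W| ≥ pn/100, the number e_G(U,W) of edges of G with one endpoint in U and the other in W satisfies e_G(U,W) > p|U||W|/2. -/
/-!
Union bound over triples `(v, U, W)` with `v ∉ U`. For a fixed triple, the event that every edge
`vw`, `w ∈ W`, is present while `e(U, W) ≤ p (|U| + 1) |W| / 2` has probability at most
`2 ^ (p (|U| + 1) |W| / 2) · p ^ |W| · (1 - p/2) ^ (|U| |W|)`: the first two factors come from the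
exponential-moment method with parameter `log 2`, and `p ^ |W|` from the star at `v`. Once
`|U| ≥ 99 / p`, `|W| ≥ pn / 100` and `p² n ≥ 10⁴ log n`, this is at most
`n ^ (-4 |U|) · p ^ |W| · e ^ (-9 |W|)`. The factor `p ^ |W|` pays for the choice of `W`, since
`(n choose w) p ^ w ≤ (e n p / w) ^ w ≤ (100 e) ^ w`, and the sum over all triples is at most
`1 / n`.
-/

open MeasureTheory Filter Topology SimpleGraph

namespace MonochromaticTrees

variable {V : Type*} {C : Type*}

open Finset Real
open scoped ENNReal NNReal

section Chernoff

open ProbabilityTheory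

lemma lintegral_bernoulli {q : ℝ≥0} (hq : q ≤ 1) (g : Bool → ℝ≥0∞) :
    ∫⁻ b, g b ∂(PMF.bernoulli q hq).toMeasure = q * g true + (1 - q) * g false := by
  rw [lintegral_fintype, Fintype.sum_bool]
  simp only [PMF.toMeasure_apply_singleton _ _ (measurableSet_singleton _), PMF.bernoulli_apply,
    cond_true, cond_false]
  rw [ENNReal.coe_sub, ENNReal.coe_one]
  ring

lemma lintegral_pi_prod {ι α : Type*} [Fintype ι] [MeasurableSpace α]
    (μ : ι → Measure α) [∀ i, IsProbabilityMeasure (μ i)] {g : ι → α → ℝ≥0∞}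
    (hg : ∀ i, Measurable (g i)) :
    ∫⁻ ω, ∏ i, g i (ω i) ∂Measure.pi μ = ∏ i, ∫⁻ a, g i a ∂μ i := by
  rw [lintegral_prod_eq_prod_lintegral_of_indepFun _ _
    (iIndepFun_pi fun i => (hg i).aemeasurable) fun i => (hg i).comp (measurable_pi_apply i)]
  exact prod_congr rfl fun i _ => (measurePreserving_eval μ i).lintegral_comp (hg i)

lemma ENNReal.mul_inv_two_add_one_sub {q : ℝ≥0∞} (hq : q ≤ 1) :
    q * 2⁻¹ + (1 - q) = 1 - q / 2 := by
  refine (ENNReal.sub_eq_of_eq_add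
    (ENNReal.div_ne_top (ne_top_of_le_ne_top ENNReal.one_ne_top hq) two_ne_zero) ?_).symm
  rw [add_right_comm, ← div_eq_mul_inv, ENNReal.add_halves, add_tsub_cancel_of_le hq]

theorem pi_bernoulli_chernoff {ι : Type*} [Fintype ι] {q : ℝ≥0} (hq : q ≤ 1) {S T : Finset ι}
    (hST : Disjoint S T) (k : ℕ) :
    Measure.pi (fun _ : ι => (PMF.bernoulli q hq).toMeasure)
        {ω | (∀ i ∈ T, ω i = true) ∧ #{i ∈ S | ω i = true} ≤ k}
      ≤ 2 ^ k * (q : ℝ≥0∞) ^ #T * (1 - q / 2) ^ #S := by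
  classical
  set μ := Measure.pi (fun _ : ι => (PMF.bernoulli q hq).toMeasure)
  -- Markov's inequality for `∏ i, g i (ω i)`, which vanishes unless all of `T` is present and
  -- is then `2⁻¹ ^ #{i ∈ S | ω i}`.
  set g : ι → Bool → ℝ≥0∞ := fun i b =>
    if i ∈ T then (if b then 1 else 0) else if i ∈ S then (if b then 2⁻¹ else 1) else 1
  have hprod : ∀ ω : ι → Bool, (∀ i ∈ T, ω i = true) →
      ∏ i, g i (ω i) = 2⁻¹ ^ #{i ∈ S | ω i = true} := by
    intro ω hω
    have h : ∀ i, g i (ω i) = if i ∈ S ∧ ω i = true then 2⁻¹ else 1 := by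
      intro i
      by_cases hT : i ∈ T
      · simp [g, hT, hω i hT, disjoint_right.mp hST hT]
      · cases ω i <;> simp [g, hT]
    rw [prod_congr rfl fun i _ => h i, prod_ite, prod_const_one, mul_one, prod_const, filter_and,
      filter_mem_eq_inter, univ_inter, inter_filter, inter_univ]
  have hint : ∫⁻ ω, ∏ i, g i (ω i) ∂μ = (q : ℝ≥0∞) ^ #T * (1 - q / 2) ^ #S := by
    have hq' : (q : ℝ≥0∞) ≤ 1 := by exact_mod_cast hq
    rw [lintegral_pi_prod _ fun i => measurable_of_finite _]
    simp only [lintegral_bernoulli]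
    rw [← prod_subset (subset_univ (S ∪ T)) fun i _ hi => ?_, prod_union hST, mul_comm,
      prod_congr rfl fun i hi => ?_, prod_const, prod_congr rfl fun i hi => ?_, prod_const]
    · simp [g, hi, disjoint_left.mp hST hi, ENNReal.mul_inv_two_add_one_sub hq']
    · simp [g, hi]
    · simp only [mem_union, not_or] at hi
      simp [g, hi, add_tsub_cancel_of_le hq']
  calc μ _ ≤ μ {ω | 1 ≤ 2 ^ k * ∏ i, g i (ω i)} := by
        refine measure_mono fun ω ⟨hT, hS⟩ => ?_
        simp only [Set.mem_ofPred_eq, hprod ω hT]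
        calc (1 : ℝ≥0∞) = 2 ^ k * 2⁻¹ ^ k := by rw [← mul_pow, ENNReal.mul_inv_cancel] <;> simp
          _ ≤ 2 ^ k * 2⁻¹ ^ #{i ∈ S | ω i = true} :=
            mul_le_mul_of_nonneg_left
              (pow_le_pow_of_le_one bot_le (ENNReal.inv_le_one.2 one_le_two) hS) bot_le
    _ ≤ ∫⁻ ω, 2 ^ k * ∏ i, g i (ω i) ∂μ := by
        simpa using mul_meas_ge_le_lintegral₀ (measurable_of_finite _).aemeasurable 1
    _ = _ := by rw [lintegral_const_mul' _ _ (by simp), hint, mul_assoc]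

end Chernoff

instance {n : ℕ} {p : ℝ} : IsProbabilityMeasure (gnp n p) := by
  unfold gnp
  infer_instance

lemma gnp_chernoff {n : ℕ} {p : ℝ} (hp0 : 0 ≤ p) (hp1 : p ≤ 1) {S T : Finset (Sym2 (Fin n))}
    (hST : Disjoint S T) (k : ℕ) :
    gnp n p {ω | (∀ e ∈ T, ω e = true) ∧ #{e ∈ S | ω e = true} ≤ k}
      ≤ ENNReal.ofReal (2 ^ k * p ^ #T * (1 - p / 2) ^ #S) := by
  refine (pi_bernoulli_chernoff _ hST k).trans_eq ?_
  have hq : ((min p.toNNReal 1 : ℝ≥0) : ℝ≥0∞) = ENNReal.ofReal p := by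
    rw [min_eq_left (Real.toNNReal_le_one.2 hp1)]
    rfl
  have h2 : (1 : ℝ≥0∞) - ENNReal.ofReal p / 2 = ENNReal.ofReal (1 - p / 2) := by
    rw [ENNReal.ofReal_sub _ (by positivity), ENNReal.ofReal_div_of_pos two_pos, ENNReal.ofReal_one,
      ENNReal.ofReal_ofNat]
  rw [hq, h2, ← ENNReal.ofReal_pow hp0, ← ENNReal.ofReal_pow (by linarith),
    ← ENNReal.ofReal_ofNat 2, ← ENNReal.ofReal_pow zero_le_two,
    ← ENNReal.ofReal_mul (by positivity), ← ENNReal.ofReal_mul (by positivity)]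

section Edges

variable [DecidableEq V]

def pairEdges (U W : Finset V) : Finset (Sym2 V) :=
  (U ×ˢ W).image fun x => s(x.1, x.2)

def starEdges (v : V) (W : Finset V) : Finset (Sym2 V) :=
  W.image (s(v, ·))

lemma card_pairEdges {U W : Finset V} (h : Disjoint U W) : #(pairEdges U W) = #U * #W := by
  rw [pairEdges, card_image_of_injOn, card_product]
  rintro ⟨u₁, w₁⟩ h₁ ⟨u₂, w₂⟩ h₂ he
  simp only [coe_product, Set.mem_prod, mem_coe] at h₁ h₂
  rcases Sym2.eq_iff.mp he with ⟨rfl, rfl⟩ | ⟨rfl, -⟩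
  · rfl
  · exact absurd h₁.1 (disjoint_right.mp h h₂.2)

lemma card_starEdges (v : V) (W : Finset V) : #(starEdges v W) = #W :=
  card_image_of_injective _ fun _ _ => Sym2.congr_right.mp

lemma disjoint_pairEdges_starEdges {v : V} {U W : Finset V} (hvU : v ∉ U) (hvW : v ∉ W) :
    Disjoint (pairEdges U W) (starEdges v W) := by
  simp only [Finset.disjoint_left, pairEdges, starEdges, mem_image, mem_product, not_exists,
    not_and]
  rintro _ ⟨⟨u, w⟩, ⟨hu, hw⟩, rfl⟩ w' - he
  rcases Sym2.eq_iff.mp he with ⟨rfl, -⟩ | ⟨rfl, -⟩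
  exacts [hvU hu, hvW hw]

end Edges

lemma edgesBetween_mono_left [Finite V] (G : SimpleGraph V) {U U' : Set V} (h : U' ⊆ U)
    (W : Set V) : edgesBetween G U' W ≤ edgesBetween G U W :=
  Set.ncard_le_ncard (fun _ ⟨he, u, hu, w, hw, heq⟩ => ⟨he, u, h hu, w, hw, heq⟩) (Set.toFinite _)

lemma edgesBetween_graphOf {n : ℕ} (ω : Sym2 (Fin n) → Bool) {U W : Finset (Fin n)}
    (h : Disjoint U W) :
    edgesBetween (graphOf ω) U W = #{e ∈ pairEdges U W | ω e = true} := by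
  rw [edgesBetween, ← Set.ncard_coe_finset]
  congr 1
  ext e
  simp only [graphOf, edgeSet_fromEdgeSet, pairEdges, coe_filter, mem_image, mem_product,
    Set.mem_ofPred_eq, Set.mem_sdiff, mem_coe, Prod.exists]
  constructor
  · rintro ⟨⟨he, -⟩, u, hu, w, hw, rfl⟩
    exact ⟨⟨u, w, ⟨hu, hw⟩, rfl⟩, he⟩
  · rintro ⟨⟨u, w, ⟨hu, hw⟩, rfl⟩, he⟩
    refine ⟨⟨he, fun hd => disjoint_left.mp h hu ?_⟩, u, hu, w, hw, rfl⟩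
    rwa [Sym2.mk_isDiag_iff.mp hd]

lemma two_pow_floor_mul_one_sub_pow_le {p : ℝ} (hp0 : 0 ≤ p) (hp1 : p ≤ 1) {u w : ℕ}
    (hu : 49 ≤ u) :
    (2 : ℝ) ^ ⌊p * (u + 1) * w / 2⌋₊ * (1 - p / 2) ^ (u * w) ≤ exp (-(p * u * w / 7)) := by
  have ha : 0 ≤ p * (u + 1) * w / 2 := by positivity
  have h2 : (2 : ℝ) ^ ⌊p * (u + 1) * w / 2⌋₊ ≤ exp (log 2 * (p * (u + 1) * w / 2)) := by
    rw [← rpow_def_of_pos two_pos, ← rpow_natCast]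
    exact rpow_le_rpow_of_exponent_le one_le_two (Nat.floor_le ha)
  have h1 : (1 - p / 2) ^ (u * w) ≤ exp (-(p / 2) * (u * w)) :=
    calc (1 - p / 2) ^ (u * w) ≤ exp (-(p / 2)) ^ (u * w) :=
          pow_le_pow_left₀ (by linarith) (by linarith [add_one_le_exp (-(p / 2))]) _
      _ = exp (-(p / 2) * (u * w)) := by rw [← exp_nat_mul]; push_cast; ring_nf
  have hlog : log 2 * (u + 1) ≤ 5 / 7 * u := by
    have : (49 : ℝ) ≤ u := by exact_mod_cast hu
    nlinarith [log_two_lt_d9]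
  calc _ ≤ exp (log 2 * (p * (u + 1) * w / 2)) * exp (-(p / 2) * (u * w)) :=
        mul_le_mul h2 h1 (pow_nonneg (by linarith) _) (exp_nonneg _)
    _ ≤ _ := by
        rw [← exp_add, exp_le_exp]
        nlinarith [mul_nonneg hp0 (Nat.cast_nonneg (α := ℝ) w)]

lemma exp_neg_div_seven_le {n u w : ℕ} {p : ℝ} (hn : 0 < n) (hp : 0 < p)
    (hpn : 10000 * log n ≤ p ^ 2 * n) (hu : 99 / p ≤ u) (hw : p * n / 100 ≤ w) :
    exp (-(p * u * w / 7)) ≤ ((n : ℝ) ^ 4)⁻¹ ^ u * exp (-(9 * w)) := by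
  have hpu : 99 ≤ p * u := by rwa [div_le_iff₀' hp] at hu
  have hpw : 100 * log n ≤ p * w := by nlinarith
  have hn4 : ((n : ℝ) ^ 4)⁻¹ = exp (-(4 * log n)) := by
    rw [exp_neg, ← exp_log (show (0 : ℝ) < n ^ 4 by positivity), log_pow]; norm_num
  rw [hn4, ← exp_nat_mul, ← exp_add, exp_le_exp]
  have : (0 : ℝ) ≤ u := u.cast_nonneg
  have : (0 : ℝ) ≤ w := w.cast_nonneg
  nlinarith

lemma choose_mul_pow_le {n w : ℕ} {x c : ℝ} (hx : 0 ≤ x) (hc : 0 ≤ c) (h : n * x ≤ c * w) :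
    n.choose w * x ^ w ≤ (c * exp 1) ^ w := by
  have hfac : (0 : ℝ) < w.factorial := by exact_mod_cast w.factorial_pos
  calc n.choose w * x ^ w ≤ (n : ℝ) ^ w / w.factorial * x ^ w := by
        gcongr; exact Nat.choose_le_pow_div w n
    _ = (n * x) ^ w / w.factorial := by ring
    _ ≤ (c * w) ^ w / w.factorial := by gcongr
    _ = c ^ w * ((w : ℝ) ^ w / w.factorial) := by ring
    _ ≤ c ^ w * exp w := by gcongr; exact pow_div_factorial_le_exp _ w.cast_nonneg w
    _ = (c * exp 1) ^ w := by rw [mul_pow, ← exp_nat_mul, mul_one]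

lemma sum_filter_card_eq {α M : Type*} [Fintype α] [AddCommMonoid M] (P : ℕ → Prop)
    [DecidablePred P] (f : ℕ → M) :
    ∑ s : Finset α with P #s, f #s =
      ∑ k ∈ range (Fintype.card α + 1) with P k, (Fintype.card α).choose k • f k := by
  classical
  rw [sum_filter, sum_filter, ← powerset_univ,
    sum_powerset_apply_card (fun k => if P k then f k else 0), card_univ]
  simp only [smul_ite, smul_zero]

lemma sum_inv_pow_card_le {n : ℕ} (hn : 2 ≤ n) :
    ∑ U : Finset (Fin n) with 1 ≤ #U, ((n : ℝ) ^ 4)⁻¹ ^ #U ≤ 2 / n ^ 3 := by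
  have hn' : (2 : ℝ) ≤ n := by exact_mod_cast hn
  have hx : ((n : ℝ) ^ 3)⁻¹ ≤ 2⁻¹ :=
    inv_anti₀ two_pos (hn'.trans (le_self_pow₀ (by linarith) (by norm_num)))
  rw [sum_filter_card_eq, Fintype.card_fin]
  calc _ ≤ ∑ k ∈ Ico 1 (n + 1), ((n : ℝ) ^ 3)⁻¹ ^ k := by
        rw [show Ico 1 (n + 1) = {k ∈ range (n + 1) | 1 ≤ k} by ext; simp; omega]
        refine sum_le_sum fun k _ => ?_
        rw [nsmul_eq_mul]
        calc _ ≤ (n : ℝ) ^ k * ((n : ℝ) ^ 4)⁻¹ ^ k := by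
              gcongr; exact_mod_cast Nat.choose_le_pow n k
          _ = _ := by rw [← mul_pow]; field_simp
    _ ≤ ((n : ℝ) ^ 3)⁻¹ ^ 1 / (1 - ((n : ℝ) ^ 3)⁻¹) :=
        geom_sum_Ico_le_of_lt_one (by positivity) (by linarith)
    _ ≤ _ := by
        rw [pow_one, div_le_iff₀ (by linarith), div_eq_mul_inv]
        nlinarith [mul_nonneg (inv_nonneg.2 (pow_nonneg (n.cast_nonneg (α := ℝ)) 3))
          (sub_nonneg.2 hx)]

lemma exp_eight_ge : (300 : ℝ) ≤ exp 8 := by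
  have h : (2.7 : ℝ) ^ 8 ≤ exp 1 ^ 8 :=
    pow_le_pow_left₀ (by norm_num) (by linarith [exp_one_gt_d9]) 8
  rw [← exp_nat_mul] at h
  norm_num at h ⊢
  linarith

lemma sum_pow_card_mul_exp_le {n : ℕ} {p : ℝ} (hn : 0 < n) (hp : 0 < p) :
    ∑ W : Finset (Fin n) with p * n / 100 ≤ #W, p ^ #W * exp (-(9 * #W)) ≤ 1 / 2 := by
  refine (sum_filter_card_eq (α := Fin n) (fun k : ℕ => p * n / 100 ≤ (k : ℝ))
    (fun k : ℕ => p ^ k * exp (-(9 * (k : ℝ))))).trans_le ?_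
  rw [Fintype.card_fin]
  have hr : 100 * exp 1 * exp (-9) ≤ 1 / 3 := by
    rw [mul_assoc, ← exp_add, show (1 : ℝ) + -9 = -8 by norm_num, exp_neg]
    rw [← div_eq_mul_inv, div_le_iff₀ (exp_pos 8)]
    linarith [exp_eight_ge]
  calc _ ≤ ∑ k ∈ range (n + 1) with p * n / 100 ≤ ((k : ℕ) : ℝ), (1 / 3 : ℝ) ^ k := by
        refine sum_le_sum fun k hk => ?_
        have hk : n * p ≤ 100 * k := by linarith [(mem_filter.1 hk).2]
        rw [nsmul_eq_mul, ← mul_assoc, show -(9 * (k : ℝ)) = k * -9 by ring, exp_nat_mul]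
        calc _ ≤ (100 * exp 1) ^ k * exp (-9) ^ k := by
              gcongr; exact choose_mul_pow_le hp.le (by norm_num) hk
          _ ≤ _ := by rw [← mul_pow]; gcongr
    _ ≤ ∑ k ∈ Ico 1 (n + 1), (1 / 3 : ℝ) ^ k := by
        refine sum_le_sum_of_subset_of_nonneg (fun k hk => ?_) fun _ _ _ => by positivity
        have hk := mem_filter.1 hk
        have : 0 < (k : ℝ) := lt_of_lt_of_le (by positivity) hk.2
        simp only [mem_Ico, mem_range] at hk ⊢
        exact ⟨by exact_mod_cast this, hk.1⟩
    _ ≤ (1 / 3 : ℝ) ^ 1 / (1 - 1 / 3) := geom_sum_Ico_le_of_lt_one (by norm_num) (by norm_num)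
    _ = 1 / 2 := by norm_num

section RandomGraph

variable {n : ℕ} {p : ℝ}

def HasDenseNeighborhoodCuts (p : ℝ) (G : SimpleGraph (Fin n)) : Prop :=
  ∀ v : Fin n, ∀ U W : Set (Fin n), Disjoint U W → W ⊆ G.neighborSet v →
    100 / p ≤ (U.ncard : ℝ) → p * n / 100 ≤ (W.ncard : ℝ) →
    p * U.ncard * W.ncard / 2 < (edgesBetween G U W : ℝ)

noncomputable def candidateTriples (p : ℝ) (n : ℕ) :
    Finset (Fin n × Finset (Fin n) × Finset (Fin n)) :=
  {t | Disjoint t.2.1 t.2.2 ∧ t.1 ∉ t.2.1 ∧ t.1 ∉ t.2.2 ∧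
    99 / p ≤ (#t.2.1 : ℝ) ∧ p * n / 100 ≤ (#t.2.2 : ℝ)}

def sparseEvent (p : ℝ) (v : Fin n) (U W : Finset (Fin n)) : Set (Sym2 (Fin n) → Bool) :=
  {ω | (∀ e ∈ starEdges v W, ω e = true) ∧
    #{e ∈ pairEdges U W | ω e = true} ≤ ⌊p * (#U + 1) * #W / 2⌋₊}

noncomputable def sparseBound (p : ℝ) (u w : ℕ) : ℝ :=
  2 ^ ⌊p * (u + 1) * w / 2⌋₊ * p ^ w * (1 - p / 2) ^ (u * w)

/-- `U` may contain `v`; the witness triple uses `U.erase v`, which is why `sparseEvent` has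
`#U + 1` and `candidateTriples` has `99 / p`. -/
lemma setOf_not_hasDenseNeighborhoodCuts_subset (hp0 : 0 < p) (hp1 : p ≤ 1) :
    {ω : Sym2 (Fin n) → Bool | ¬ HasDenseNeighborhoodCuts p (graphOf ω)}
      ⊆ ⋃ t ∈ candidateTriples p n, sparseEvent p t.1 t.2.1 t.2.2 := by
  intro ω hω
  simp only [HasDenseNeighborhoodCuts, Set.mem_ofPred_eq, not_forall, not_lt] at hω
  obtain ⟨v, U, W, hUW, hWN, hU, hW, hcount⟩ := hω
  obtain ⟨U, rfl⟩ := (Set.toFinite U).exists_finset_coe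
  obtain ⟨W, rfl⟩ := (Set.toFinite W).exists_finset_coe
  simp only [Set.ncard_coe_finset] at hU hW hcount
  rw [disjoint_coe] at hUW
  have hvW : v ∉ W := fun hv => (graphOf ω).irrefl (hWN hv)
  have hU' : (#U : ℝ) ≤ #(U.erase v) + 1 := by
    have := pred_card_le_card_erase (s := U) (a := v)
    exact_mod_cast (show #U ≤ #(U.erase v) + 1 by omega)
  have hUW' : Disjoint (U.erase v) W := disjoint_of_subset_left (erase_subset v U) hUW
  refine Set.mem_biUnion (x := (v, U.erase v, W)) ?_ ⟨?_, ?_⟩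
  · have : 1 ≤ 1 / p := by rw [le_div_iff₀ hp0]; linarith
    simp only [candidateTriples, coe_filter, mem_univ, true_and, Set.mem_ofPred_eq]
    refine ⟨hUW', notMem_erase v U, hvW, ?_, hW⟩
    linarith [show 100 / p = 99 / p + 1 / p by ring]
  · simp only [starEdges, mem_image]
    rintro _ ⟨w, hw, rfl⟩
    exact ((fromEdgeSet_adj _).mp (hWN hw)).1
  · rw [← edgesBetween_graphOf ω hUW']
    refine Nat.le_floor ?_
    calc (edgesBetween (graphOf ω) ↑(U.erase v) ↑W : ℝ)
        ≤ edgesBetween (graphOf ω) ↑U ↑W := by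
          exact_mod_cast edgesBetween_mono_left _ (coe_subset.2 (erase_subset v U)) _
      _ ≤ p * #U * #W / 2 := hcount
      _ ≤ _ := by gcongr

lemma gnp_sparseEvent_le (hp0 : 0 ≤ p) (hp1 : p ≤ 1) {v : Fin n} {U W : Finset (Fin n)}
    (hUW : Disjoint U W) (hvU : v ∉ U) (hvW : v ∉ W) :
    gnp n p (sparseEvent p v U W) ≤ ENNReal.ofReal (sparseBound p #U #W) := by
  have := gnp_chernoff hp0 hp1 (disjoint_pairEdges_starEdges hvU hvW) ⌊p * (#U + 1) * #W / 2⌋₊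
  rwa [card_pairEdges hUW, card_starEdges] at this

lemma sparseBound_nonneg (hp0 : 0 ≤ p) (hp1 : p ≤ 1) (u w : ℕ) : 0 ≤ sparseBound p u w := by
  have : 0 ≤ 1 - p / 2 := by linarith
  unfold sparseBound
  positivity

lemma sparseBound_le {u w : ℕ} (hn : 0 < n) (hp0 : 0 < p) (hp1 : p ≤ 1)
    (hpn : 10000 * log n ≤ p ^ 2 * n) (hu : 99 / p ≤ u) (hw : p * n / 100 ≤ w) :
    sparseBound p u w ≤ ((n : ℝ) ^ 4)⁻¹ ^ u * (p ^ w * exp (-(9 * w))) := by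
  have hu49 : 49 ≤ u := by
    have : (99 : ℝ) ≤ 99 / p := by rw [le_div_iff₀ hp0]; linarith
    exact_mod_cast (show (49 : ℝ) ≤ u by linarith)
  calc sparseBound p u w = p ^ w * (2 ^ ⌊p * (u + 1) * w / 2⌋₊ * (1 - p / 2) ^ (u * w)) := by
        rw [sparseBound]; ring
    _ ≤ p ^ w * exp (-(p * u * w / 7)) := by
        gcongr; exact two_pow_floor_mul_one_sub_pow_le hp0.le hp1 hu49
    _ ≤ p ^ w * (((n : ℝ) ^ 4)⁻¹ ^ u * exp (-(9 * w))) := by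
        gcongr; exact exp_neg_div_seven_le hn hp0 hpn hu hw
    _ = _ := by ring

lemma sum_sparseBound_le (hn : 2 ≤ n) (hp0 : 0 < p) (hp1 : p ≤ 1)
    (hpn : 10000 * log n ≤ p ^ 2 * n) :
    ∑ t ∈ candidateTriples p n, sparseBound p #t.2.1 #t.2.2 ≤ 1 / n := by
  have hn0 : (0 : ℝ) < n := by positivity
  set F : Finset (Fin n) → ℝ := fun U => ((n : ℝ) ^ 4)⁻¹ ^ #U
  set G : Finset (Fin n) → ℝ := fun W => p ^ #W * exp (-(9 * #W))
  calc _ ≤ ∑ t ∈ candidateTriples p n, F t.2.1 * G t.2.2 := by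
        refine sum_le_sum fun t ht => ?_
        simp only [candidateTriples, mem_filter, mem_univ, true_and] at ht
        exact sparseBound_le (by omega) hp0 hp1 hpn ht.2.2.2.1 ht.2.2.2.2
    _ ≤ ∑ t ∈ (univ : Finset (Fin n)) ×ˢ
          ((univ.filter fun U : Finset (Fin n) => 1 ≤ #U) ×ˢ
            (univ.filter fun W : Finset (Fin n) => p * n / 100 ≤ #W)),
          F t.2.1 * G t.2.2 := by
        refine sum_le_sum_of_subset_of_nonneg (fun t ht => ?_) fun _ _ _ => by positivity
        simp only [candidateTriples, mem_filter, mem_univ, true_and, mem_product] at ht ⊢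
        exact ⟨Nat.cast_pos.1 ((div_pos (by norm_num) hp0).trans_le ht.2.2.2.1), ht.2.2.2.2⟩
    _ = n * ((∑ U : Finset (Fin n) with 1 ≤ #U, F U) *
          ∑ W : Finset (Fin n) with p * n / 100 ≤ #W, G W) := by
        simp_rw [sum_product, sum_mul_sum, sum_const, card_univ, Fintype.card_fin, nsmul_eq_mul]
    _ ≤ n * (2 / n ^ 3 * (1 / 2)) := by
        gcongr
        · exact sum_inv_pow_card_le hn
        · exact sum_pow_card_mul_exp_le (by omega) hp0
    _ = 1 / n ^ 2 := by field_simp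
    _ ≤ 1 / n := one_div_le_one_div_of_le hn0 (by nlinarith [show (2 : ℝ) ≤ n by exact_mod_cast hn])

theorem gnp_hasDenseNeighborhoodCuts_ge (hn : 2 ≤ n) (hp0 : 0 < p) (hp1 : p ≤ 1)
    (hpn : 10000 * log n ≤ p ^ 2 * n) :
    1 - ENNReal.ofReal (1 / n) ≤ gnp n p {ω | HasDenseNeighborhoodCuts p (graphOf ω)} := by
  have hbad : gnp n p {ω | ¬ HasDenseNeighborhoodCuts p (graphOf ω)} ≤ ENNReal.ofReal (1 / n) :=
    calc _ ≤ gnp n p (⋃ t ∈ candidateTriples p n, sparseEvent p t.1 t.2.1 t.2.2) :=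
          measure_mono (setOf_not_hasDenseNeighborhoodCuts_subset hp0 hp1)
      _ ≤ ∑ t ∈ candidateTriples p n, gnp n p (sparseEvent p t.1 t.2.1 t.2.2) :=
          measure_biUnion_finset_le _ _
      _ ≤ ∑ t ∈ candidateTriples p n, ENNReal.ofReal (sparseBound p #t.2.1 #t.2.2) := by
          refine sum_le_sum fun t ht => ?_
          simp only [candidateTriples, mem_filter, mem_univ, true_and] at ht
          exact gnp_sparseEvent_le hp0.le hp1 ht.1 ht.2.1 ht.2.2.1
      _ = ENNReal.ofReal (∑ t ∈ candidateTriples p n, sparseBound p #t.2.1 #t.2.2) :=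
          (ENNReal.ofReal_sum_of_nonneg fun _ _ => sparseBound_nonneg hp0.le hp1 _ _).symm
      _ ≤ _ := ENNReal.ofReal_le_ofReal (sum_sparseBound_le hn hp0 hp1 hpn)
  rw [← compl_compl {ω | _}, prob_compl_eq_one_sub (Set.toFinite _).measurableSet,
    Set.compl_ofPred]
  exact tsub_le_tsub_left hbad 1

end RandomGraph

lemma eventually_mul_log_le_sq_mul {p : ℕ → ℝ}
    (hgrow : Tendsto (fun n : ℕ => p n / sqrt (log n / n)) atTop atTop) {C : ℝ}
    (hC : 0 ≤ C) : ∀ᶠ n : ℕ in atTop, C * log n ≤ p n ^ 2 * n := by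
  filter_upwards [hgrow.eventually_ge_atTop (sqrt C), eventually_ge_atTop 2] with n hp hn
  have hn' : (2 : ℝ) ≤ n := by exact_mod_cast hn
  have hs : 0 < sqrt (log n / n) := sqrt_pos.2 (div_pos (log_pos (by linarith)) (by linarith))
  rw [le_div_iff₀ hs] at hp
  have := pow_le_pow_left₀ (by positivity) hp 2
  rw [mul_pow, sq_sqrt hC, sq_sqrt (div_pos (log_pos (by linarith)) (by linarith)).le] at this
  rwa [mul_div_assoc', div_le_iff₀ (by linarith)] at this

/-- If `p ≫ ((log n)/n)^{1/2}`, then a.a.s.: for every vertex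
`v` and all disjoint `U ⊆ V`, `W ⊆ N(v)` with `|U| ≥ 100/p`, `|W| ≥ pn/100`,
we have `e(U,W) > p|U||W|/2`. -/
theorem stmt_4 (p : ℕ → ℝ) (hp : ∀ n, 0 ≤ p n ∧ p n ≤ 1)
    (hgrow : Tendsto (fun n : ℕ => p n / Real.sqrt (Real.log n / n)) atTop atTop) :
    Tendsto (fun n : ℕ => gnp n (p n)
      {ω | ∀ v : Fin n, ∀ U W : Set (Fin n), Disjoint U W →
              W ⊆ (graphOf ω).neighborSet v →
              100 / p n ≤ (U.ncard : ℝ) → p n * n / 100 ≤ (W.ncard : ℝ) →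
              p n * U.ncard * W.ncard / 2 < (edgesBetween (graphOf ω) U W : ℝ)})
      atTop (𝓝 1) := by
  have hlow : Tendsto (fun n : ℕ => 1 - ENNReal.ofReal (1 / n)) atTop (𝓝 1) := by
    simpa using ENNReal.Tendsto.sub tendsto_const_nhds
      (ENNReal.tendsto_ofReal tendsto_one_div_atTop_nhds_zero_nat) (Or.inl ENNReal.one_ne_top)
  refine tendsto_of_tendsto_of_tendsto_of_le_of_le' hlow tendsto_const_nhds ?_
    (.of_forall fun n => prob_le_one)
  filter_upwards [eventually_mul_log_le_sq_mul hgrow (C := 10000) (by norm_num),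
    eventually_ge_atTop 2] with n hpn hn
  have hlog : 0 < log n := log_pos (by exact_mod_cast hn)
  have hp0 : 0 < p n := (hp n).1.lt_of_ne fun h => by rw [← h] at hpn; nlinarith
  exact gnp_hasDenseNeighborhoodCuts_ge hn hp0 (hp n).2 hpn

end MonochromaticTrees
end

section
/- If p = p(n) ≫ ((log n)/n)^{1/2}, then for every fixed ε > 0, asymptotically almost surely G ∈ G(n,p) satisfies: every non-empty subgraph H ⊆ G with minimum degree δ(H) ≥ (1/2 + ε)pn is connected. -/
open MeasureTheory Filter Topology SimpleGraph

namespace MonochromaticTrees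

variable {V : Type*} {C : Type*}

/-!
If `H` is disconnected, the vertex set of some union of components of `H` is a nonempty set `U`
with `|U| ≤ n/2`. No edge of `H` leaves `U`, so `U` spans at least `δ(H)|U|/2 ≥ (1 + 2ε)pn|U|/4`
edges of `G`, whereas the expected number of edges it spans is at most `p|U|²/2 ≤ pn|U|/4`.
By the Chernoff bound this happens for a fixed `U` with probability at most `exp(-c p n |U|)`, and
the union bound over all `U` gives at most `(1 + e^{-cpn})ⁿ - 1 ≤ exp(n e^{-cpn}) - 1`, which tends
to `0` because `pn ≫ log n`.
-/

open Finset Real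
open scoped NNReal

def SmallSetsSparse [Fintype V] (G : SimpleGraph V) (d : ℝ) : Prop :=
  ∀ U : Finset V, U.Nonempty → 2 * #U ≤ Fintype.card V → 2 * (edgesWithin G U : ℝ) < d * #U

theorem mul_card_le_two_mul_edgesWithin [Fintype V] {G : SimpleGraph V}
    (H : G.Subgraph) {U : Finset V} (hU : ∀ v ∈ U, ∀ w, H.Adj v w → w ∈ U) {d : ℝ}
    (hd : ∀ v ∈ U, d ≤ (H.neighborSet v).ncard) :
    d * #U ≤ 2 * edgesWithin G U := by
  classical
  set K := (H.induce U).spanningCoe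
  have hdeg : ∀ v ∈ U, (H.neighborSet v).ncard = K.degree v := by
    intro v hv
    rw [← card_neighborSet_eq_degree, ← Nat.card_eq_fintype_card, Nat.card_coe_set_eq]
    congr 1
    ext w
    simp only [Subgraph.mem_neighborSet, mem_neighborSet, K, Subgraph.spanningCoe_adj,
      Subgraph.induce_adj, Finset.mem_coe]
    exact ⟨fun h => ⟨hv, hU v hv w h, h⟩, fun h => h.2.2⟩
  have hedges : #K.edgeFinset ≤ edgesWithin G U := by
    rw [edgesWithin, ← Set.ncard_coe_finset, coe_edgeFinset, Subgraph.edgeSet_spanningCoe]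
    exact Set.ncard_le_ncard (fun e he => ⟨Subgraph.edgeSet_subset _ he,
      fun v hv => Subgraph.mem_verts_of_mem_edge he hv⟩) (Set.toFinite _)
  calc d * #U = ∑ _v ∈ U, d := by rw [sum_const, nsmul_eq_mul, mul_comm]
    _ ≤ ∑ v ∈ U, (K.degree v : ℝ) := sum_le_sum fun v hv => hdeg v hv ▸ hd v hv
    _ ≤ ∑ v, (K.degree v : ℝ) :=
        sum_le_sum_of_subset_of_nonneg (subset_univ U) fun _ _ _ => by positivity
    _ = 2 * #K.edgeFinset := by exact_mod_cast K.sum_degrees_eq_twice_card_edges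
    _ ≤ 2 * edgesWithin G U := by exact_mod_cast Nat.mul_le_mul_left 2 hedges

theorem _root_.SimpleGraph.Subgraph.exists_closed_of_not_connected [Fintype V]
    {G : SimpleGraph V} (H : G.Subgraph) (hne : H.verts.Nonempty) (hH : ¬ H.coe.Connected) :
    ∃ U : Finset V, U.Nonempty ∧ (U : Set V) ⊆ H.verts ∧ 2 * #U ≤ Fintype.card V ∧
      ∀ v ∈ U, ∀ w, H.Adj v w → w ∈ U := by
  classical
  obtain ⟨a, b, hab⟩ : ∃ a b : H.verts, ¬ H.coe.Reachable a b := by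
    by_contra! h
    exact hH ((connected_iff _).2 ⟨h, hne.to_subtype⟩)
  have hcomp {v w : V} (hv : v ∈ H.verts) (hvw : H.Adj v w) :
      H.coe.connectedComponentMk ⟨w, H.edge_vert hvw.symm⟩ =
        H.coe.connectedComponentMk ⟨v, hv⟩ :=
    (ConnectedComponent.connectedComponentMk_eq_of_adj
      (show H.coe.Adj ⟨v, hv⟩ ⟨w, H.edge_vert hvw.symm⟩ from hvw)).symm
  set c := H.coe.connectedComponentMk a
  set A : Finset V := {v | ∃ hv : v ∈ H.verts, H.coe.connectedComponentMk ⟨v, hv⟩ = c}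
  set B : Finset V := {v | ∃ hv : v ∈ H.verts, H.coe.connectedComponentMk ⟨v, hv⟩ ≠ c}
  have hA : A.Nonempty := ⟨a, by simp [A, c]⟩
  have hB : B.Nonempty := ⟨b, by
    simp only [B, mem_filter, mem_univ, true_and]
    exact ⟨b.2, fun h => hab (ConnectedComponent.exact h.symm)⟩⟩
  have hAB : #A + #B ≤ Fintype.card V := by
    rw [← card_union_of_disjoint]
    · exact card_le_univ _
    · simp only [A, B, disjoint_filter, mem_univ, forall_const]
      rintro v ⟨_, hc⟩ ⟨_, hc'⟩
      exact hc' hc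
  by_cases hsmall : 2 * #A ≤ Fintype.card V
  · refine ⟨A, hA, fun v hv => ?_, hsmall, fun v hv w hvw => ?_⟩ <;>
      simp only [A, mem_coe, mem_filter, mem_univ, true_and] at hv ⊢
    · exact hv.1
    · exact ⟨_, (hcomp hv.1 hvw).trans hv.2⟩
  · refine ⟨B, hB, fun v hv => ?_, by omega, fun v hv w hvw => ?_⟩ <;>
      simp only [B, mem_coe, mem_filter, mem_univ, true_and] at hv ⊢
    · exact hv.1
    · exact ⟨_, (hcomp hv.1 hvw).trans_ne hv.2⟩

theorem SmallSetsSparse.subgraph_coe_connected [Fintype V] {G : SimpleGraph V} {d : ℝ}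
    (hG : SmallSetsSparse G d) (H : G.Subgraph) (hne : H.verts.Nonempty)
    (hd : ∀ v ∈ H.verts, d ≤ (H.neighborSet v).ncard) : H.coe.Connected := by
  by_contra hH
  obtain ⟨U, hUne, hUH, hUcard, hU⟩ := H.exists_closed_of_not_connected hne hH
  exact (hG U hUne hUcard).not_ge
    (mul_card_le_two_mul_edgesWithin H hU fun v hv => hd v (hUH hv))

theorem measureReal_pi_le_card_filter_le {ι : Type*} [Fintype ι] (ν : Measure Bool)
    [IsProbabilityMeasure ν] (T : Finset ι) {t : ℝ} (ht : 0 ≤ t) (k : ℝ) :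
    (Measure.pi fun _ : ι => ν).real {ω | k ≤ (#{i ∈ T | ω i} : ℝ)}
      ≤ exp (ν.real {true} * (exp t - 1) * #T - t * k) := by
  classical
  set f : ι → Bool → ℝ := fun i b => if i ∈ T ∧ b then exp t else 1
  have hexp (ω : ι → Bool) : exp (t * #{i ∈ T | ω i}) = ∏ i, f i (ω i) := by
    rw [Finset.prod_ite, Finset.prod_const, Finset.prod_const_one, mul_one, ← exp_nat_mul,
      mul_comm, ← Finset.filter_filter, Finset.filter_mem_eq_inter, Finset.univ_inter]
  have hfactor (i : ι) :
      ∫ b, f i b ∂ν ≤ exp (if i ∈ T then ν.real {true} * (exp t - 1) else 0) := by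
    have hfalse : ν.real {false} = 1 - ν.real {true} := by
      rw [← probReal_compl_eq_one_sub (measurableSet_singleton _)]
      congr 1; ext b; simp
    rw [integral_fintype .of_finite, Fintype.sum_bool, hfalse]
    by_cases hi : i ∈ T
    · simp only [f, hi, true_and, if_true, smul_eq_mul, Bool.false_eq_true, if_false]
      linarith [add_one_le_exp (ν.real {true} * (exp t - 1))]
    · simp [f, hi]
  calc (Measure.pi fun _ : ι => ν).real {ω | k ≤ (#{i ∈ T | ω i} : ℝ)}
      ≤ exp (-t * k) * ProbabilityTheory.mgf (fun ω => (#{i ∈ T | ω i} : ℝ))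
          (Measure.pi fun _ : ι => ν) t :=
        ProbabilityTheory.measure_ge_le_exp_mul_mgf k ht .of_finite
    _ = exp (-t * k) * ∏ i, ∫ b, f i b ∂ν := by
        simp only [ProbabilityTheory.mgf, hexp]
        rw [integral_fintype_prod_eq_prod]
    _ ≤ exp (-t * k) * ∏ i, exp (if i ∈ T then ν.real {true} * (exp t - 1) else 0) := by
        gcongr with i
        exact hfactor i
    _ = exp (ν.real {true} * (exp t - 1) * #T - t * k) := by
        rw [← exp_sum, ← exp_add, Finset.sum_ite_mem, Finset.univ_inter, Finset.sum_const,
          nsmul_eq_mul]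
        ring_nf

instance inst_s7 {n : ℕ} {p : ℝ} : IsProbabilityMeasure (gnp n p) := by
  unfold gnp; infer_instance

theorem gnp_real_le_card_filter_le {n : ℕ} {p : ℝ} (hp0 : 0 ≤ p) (hp1 : p ≤ 1)
    (T : Finset (Sym2 (Fin n))) {t : ℝ} (ht : 0 ≤ t) (k : ℝ) :
    (gnp n p).real {ω | k ≤ (#{e ∈ T | ω e} : ℝ)} ≤ exp (p * (exp t - 1) * #T - t * k) := by
  rw [gnp]
  convert measureReal_pi_le_card_filter_le _ T ht k using 5
  · simp only [measureReal_def, PMF.toMeasure_apply_singleton _ _ (measurableSet_singleton _),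
      min_eq_left (toNNReal_le_one.2 hp1)]
    change p = ((p.toNNReal : ℝ≥0) : ENNReal).toReal
    simp [hp0]
  · infer_instance

theorem edgesWithin_graphOf {n : ℕ} (ω : Sym2 (Fin n) → Bool) (S : Finset (Fin n)) :
    edgesWithin (graphOf ω) S = #{e ∈ {e ∈ S.sym2 | ¬ e.IsDiag} | ω e} := by
  rw [edgesWithin, ← Set.ncard_coe_finset]
  congr 1
  ext e
  simp only [graphOf, edgeSet_fromEdgeSet, coe_filter, mem_filter, mem_sym2_iff,
    Set.mem_ofPred_eq, Set.mem_sdiff, Sym2.mem_diagSet, mem_coe]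
  tauto

theorem card_sym2_filter_not_isDiag {α : Type*} [DecidableEq α] (S : Finset α) :
    #{e ∈ S.sym2 | ¬ e.IsDiag} = (#S).choose 2 := by
  rw [sym2_eq_image, Sym2.filter_image_mk_not_isDiag, Sym2.card_image_offDiag]

noncomputable def chernoffRate (δ : ℝ) : ℝ := (1 + δ) * log (1 + δ) - δ

theorem chernoffRate_pos {δ : ℝ} (hδ : 0 < δ) : 0 < chernoffRate δ := by
  have hlog := lt_log_one_add_of_pos hδ
  rw [div_lt_iff₀ (by linarith)] at hlog
  unfold chernoffRate
  nlinarith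

theorem gnp_real_edgesWithin_ge_le {n : ℕ} {p ε : ℝ} (hp0 : 0 ≤ p) (hp1 : p ≤ 1) (hε : 0 ≤ ε)
    (S : Finset (Fin n)) (hS : 2 * #S ≤ n) :
    (gnp n p).real {ω | (1 / 2 + ε) * p * n * #S ≤ 2 * edgesWithin (graphOf ω) S}
      ≤ exp (-(chernoffRate (2 * ε) / 4 * p * n * #S)) := by
  set T := {e ∈ S.sym2 | ¬ e.IsDiag}
  set k := (1 / 2 + ε) * p * n * #S / 2 with hk
  have hevent : {ω | (1 / 2 + ε) * p * n * #S ≤ 2 * edgesWithin (graphOf ω) S}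
      ⊆ {ω | k ≤ (#{e ∈ T | ω e} : ℝ)} := by
    intro ω hω
    rw [Set.mem_ofPred_eq, edgesWithin_graphOf] at hω
    rw [Set.mem_ofPred_eq, hk]
    linarith
  have hT : (#T : ℝ) ≤ n * #S / 4 := by
    have hSn : 2 * (#S : ℝ) ≤ n := by exact_mod_cast hS
    rw [card_sym2_filter_not_isDiag, Nat.cast_choose_two]
    nlinarith
  have hlog : 0 ≤ log (1 + 2 * ε) := log_nonneg (by linarith)
  calc (gnp n p).real {ω | (1 / 2 + ε) * p * n * #S ≤ 2 * edgesWithin (graphOf ω) S}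
      ≤ (gnp n p).real {ω | k ≤ (#{e ∈ T | ω e} : ℝ)} := measureReal_mono hevent
    _ ≤ exp (p * (exp (log (1 + 2 * ε)) - 1) * #T - log (1 + 2 * ε) * k) :=
        gnp_real_le_card_filter_le hp0 hp1 T hlog k
    _ ≤ exp (-(chernoffRate (2 * ε) / 4 * p * n * #S)) := by
        rw [exp_log (by linarith)]
        gcongr
        have : 0 ≤ p * ε := mul_nonneg hp0 hε
        unfold chernoffRate
        simp only [k]
        nlinarith

theorem sum_pow_card_filter_nonempty_le {ι : Type*} [Fintype ι] {q : ℝ} (hq : 0 ≤ q) :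
    ∑ S : Finset ι with S.Nonempty, q ^ #S ≤ exp (Fintype.card ι * q) - 1 := by
  classical
  have hsum : ∑ S : Finset ι, q ^ #S = (q + 1) ^ Fintype.card ι := by
    simpa using Fintype.sum_pow_mul_eq_add_pow ι q 1
  have hnonempty : ∑ S : Finset ι with S.Nonempty, q ^ #S = (q + 1) ^ Fintype.card ι - 1 := by
    rw [← hsum, ← sum_filter_add_sum_filter_not univ (fun S : Finset ι => S.Nonempty)]
    simp [not_nonempty_iff_eq_empty, filter_eq']
  rw [hnonempty, exp_nat_mul]
  gcongr
  exact add_one_le_exp q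

theorem gnp_real_not_smallSetsSparse_le {n : ℕ} {p ε : ℝ} (hp0 : 0 ≤ p) (hp1 : p ≤ 1)
    (hε : 0 ≤ ε) :
    (gnp n p).real {ω | ¬ SmallSetsSparse (graphOf ω) ((1 / 2 + ε) * p * n)}
      ≤ exp (n * exp (-(chernoffRate (2 * ε) / 4 * p * n))) - 1 := by
  set q := exp (-(chernoffRate (2 * ε) / 4 * p * n))
  set E : Finset (Fin n) → Set (Sym2 (Fin n) → Bool) :=
    fun S => {ω | (1 / 2 + ε) * p * n * #S ≤ 2 * edgesWithin (graphOf ω) S}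
  have hunion : {ω | ¬ SmallSetsSparse (graphOf ω) ((1 / 2 + ε) * p * n)}
      ⊆ ⋃ S ∈ ({S | S.Nonempty ∧ 2 * #S ≤ n} : Finset (Finset (Fin n))), E S := by
    intro ω hω
    simp only [SmallSetsSparse, Fintype.card_fin, not_forall, not_lt, Set.mem_ofPred_eq] at hω
    obtain ⟨S, hS, hSn, hdense⟩ := hω
    exact Set.mem_biUnion (by simp [hS, hSn]) hdense
  calc (gnp n p).real {ω | ¬ SmallSetsSparse (graphOf ω) ((1 / 2 + ε) * p * n)}
      ≤ ∑ S ∈ ({S | S.Nonempty ∧ 2 * #S ≤ n} : Finset (Finset (Fin n))), (gnp n p).real (E S) :=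
        (measureReal_mono hunion (measure_ne_top _ _)).trans (measureReal_biUnion_finset_le _ _)
    _ ≤ ∑ S ∈ ({S | S.Nonempty ∧ 2 * #S ≤ n} : Finset (Finset (Fin n))), q ^ #S := by
        refine sum_le_sum fun S hS => ?_
        refine (gnp_real_edgesWithin_ge_le hp0 hp1 hε S (mem_filter.1 hS).2.2).trans_eq ?_
        rw [← exp_nat_mul]
        ring_nf
    _ ≤ ∑ S : Finset (Fin n) with S.Nonempty, q ^ #S :=
        sum_le_sum_of_subset_of_nonneg
          (fun S hS => mem_filter.2 ⟨mem_univ S, (mem_filter.1 hS).2.1⟩)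
          fun _ _ _ => by positivity
    _ ≤ exp (n * q) - 1 := by
        simpa using sum_pow_card_filter_nonempty_le (ι := Fin n) (exp_nonneg _)

theorem tendsto_natCast_mul_exp_neg {f : ℕ → ℝ}
    (hf : Tendsto (fun n => f n / log n) atTop atTop) :
    Tendsto (fun n : ℕ => n * exp (-f n)) atTop (𝓝 0) := by
  have hinv : Tendsto (fun n : ℕ => (n : ℝ)⁻¹) atTop (𝓝 0) :=
    tendsto_inv_atTop_zero.comp tendsto_natCast_atTop_atTop
  refine squeeze_zero' (Eventually.of_forall fun n => by positivity) ?_ hinv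
  filter_upwards [hf.eventually_ge_atTop 2, eventually_ge_atTop 2] with n hfn hn
  have hn : (1 : ℝ) < n := by exact_mod_cast hn
  have hlog : 0 < log n := log_pos hn
  rw [le_div_iff₀ hlog] at hfn
  calc (n : ℝ) * exp (-f n) = exp (log n - f n) := by
        rw [sub_eq_add_neg, exp_add, exp_log (by linarith)]
    _ ≤ exp (-log n) := by gcongr; linarith
    _ = (n : ℝ)⁻¹ := by rw [exp_neg, exp_log (by linarith)]

theorem tendsto_mul_natCast_div_log {p : ℕ → ℝ} (hp : ∀ n, 0 ≤ p n)
    (hgrow : Tendsto (fun n : ℕ => p n / Real.sqrt (Real.log n / n)) atTop atTop)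
    {c : ℝ} (hc : 0 < c) :
    Tendsto (fun n : ℕ => c * p n * n / log n) atTop atTop := by
  refine tendsto_atTop_mono' _ ?_ (hgrow.const_mul_atTop hc)
  filter_upwards [eventually_ge_atTop 2] with n hn
  have hn : (1 : ℝ) < n := by exact_mod_cast hn
  have hx : 0 < log n / n := div_pos (log_pos hn) (by linarith)
  have hx1 : log n / n ≤ 1 := (div_le_one (by linarith)).2 (log_le_self (by linarith))
  have hsqrt : log n / n ≤ √(log n / n) := (le_sqrt' hx).2 (by nlinarith)
  calc c * (p n / √(log n / n)) ≤ c * (p n / (log n / n)) := by gcongr; exact hp n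
    _ = c * p n * n / log n := by field_simp

/-- If `p ≫ ((log n)/n)^{1/2}`, then for every fixed `ε > 0`,
a.a.s. every non-empty subgraph `H ⊆ G` with minimum degree at least
`(1/2 + ε)pn` is connected. -/
theorem stmt_7 (p : ℕ → ℝ) (hp : ∀ n, 0 ≤ p n ∧ p n ≤ 1)
    (hgrow : Tendsto (fun n : ℕ => p n / Real.sqrt (Real.log n / n)) atTop atTop)
    (ε : ℝ) (hε : 0 < ε) :
    Tendsto (fun n : ℕ => gnp n (p n)
      {ω | ∀ H : (graphOf ω).Subgraph, H.verts.Nonempty →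
              (∀ v ∈ H.verts, (1 / 2 + ε) * p n * n ≤ ((H.neighborSet v).ncard : ℝ)) →
              H.coe.Connected})
      atTop (𝓝 1) := by
  set c := chernoffRate (2 * ε) / 4
  have hc : 0 < c := by have := chernoffRate_pos (by linarith : 0 < 2 * ε); positivity
  have hbound : Tendsto (fun n : ℕ => exp (n * exp (-(c * p n * n))) - 1) atTop (𝓝 0) := by
    simpa [Function.comp_def] using ((continuous_exp.tendsto 0).comp (tendsto_natCast_mul_exp_neg
      (tendsto_mul_natCast_div_log (fun n => (hp n).1) hgrow hc))).sub_const 1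
  refine (ENNReal.tendsto_toReal_iff (fun n => measure_ne_top _ _) ENNReal.one_ne_top).1 ?_
  refine tendsto_of_tendsto_of_tendsto_of_le_of_le (sub_zero (1 : ℝ) ▸ hbound.const_sub 1)
    tendsto_const_nhds (fun n => ?_) (fun n => measureReal_le_one)
  have hsparse := probReal_compl_eq_one_sub (μ := gnp n (p n))
    (MeasurableSet.of_discrete (s := {ω | SmallSetsSparse (graphOf ω) ((1 / 2 + ε) * p n * n)}))
  rw [Set.compl_ofPred] at hsparse
  calc 1 - (exp (n * exp (-(c * p n * n))) - 1)
      ≤ (gnp n (p n)).real {ω | SmallSetsSparse (graphOf ω) ((1 / 2 + ε) * p n * n)} := by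
        linarith [gnp_real_not_smallSetsSparse_le (n := n) (hp n).1 (hp n).2 hε.le]
    _ ≤ _ := measureReal_mono fun ω hω H hne hd => hω.subgraph_coe_connected H hne hd

end MonochromaticTrees
end

section
/- If p = p(n) ≫ ((log n)/n)^{1/2}, then asymptotically almost surely G ∈ G(n,p) satisfies: every subgraph H ⊆ G on at most 100/p vertices is 10 log n-degenerate. -/
open MeasureTheory Filter Topology SimpleGraph

/-!
First moment method. If the property fails, some nonempty `S` with `|S| ≤ 100/p` has all its
inner degrees at least `D = ⌈10 log n⌉`, so `G[S]` has at least `k = ⌊|S| D / 2⌋` edges. This has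
probability at most `C(|S|², k) p^k ≤ (e |S|² p / k)^k ≤ e^{-k} ≤ n^{-3|S|}`, because `|S| p ≤ 100`
and `k ≥ |S| D / 3`. Summing over all `S` gives at most `(1 + n^{-3})^n - 1 ≤ exp (n^{-2}) - 1 → 0`.
-/

open Finset Real

namespace SimpleGraph

variable {V : Type*} (G : SimpleGraph V) [DecidableRel G.Adj]

theorem card_interedges_eq_sum (s t : Finset V) :
    #(G.interedges s t) = ∑ v ∈ s, #{u ∈ t | G.Adj v u} := by
  simp only [interedges, Rel.interedges, card_filter, sum_product]

theorem card_interedges_self_le_two_mul [DecidableEq V] (s : Finset V) :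
    #(G.interedges s s) ≤ 2 * #{e ∈ s.sym2 | e ∈ G.edgeSet} := by
  refine card_le_mul_card_image_of_maps_to (f := fun x => s(x.1, x.2)) ?_ 2 ?_
  · rintro ⟨a, b⟩ hab
    rw [mk_mem_interedges_iff] at hab
    simpa [mk_mem_sym2_iff] using ⟨⟨hab.1, hab.2.1⟩, hab.2.2⟩
  · intro e _
    induction e using Sym2.ind with
    | _ a b =>
      calc #{x ∈ G.interedges s s | s(x.1, x.2) = s(a, b)} ≤ #{(a, b), (b, a)} := by
            refine card_le_card fun x hx => ?_
            simp only [mem_filter, Sym2.eq_iff] at hx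
            rcases x with ⟨x, y⟩
            rcases hx.2 with ⟨rfl, rfl⟩ | ⟨rfl, rfl⟩ <;> simp
        _ ≤ 2 := card_le_two

theorem card_mul_le_two_mul_card_edges_within [DecidableEq V] {s : Finset V} {D : ℕ}
    (h : ∀ v ∈ s, D ≤ #{u ∈ s | G.Adj v u}) :
    #s * D ≤ 2 * #{e ∈ s.sym2 | e ∈ G.edgeSet} :=
  calc #s * D = ∑ _v ∈ s, D := by rw [sum_const, smul_eq_mul]
    _ ≤ #(G.interedges s s) := (sum_le_sum h).trans_eq (G.card_interedges_eq_sum s s).symm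
    _ ≤ _ := G.card_interedges_self_le_two_mul s

end SimpleGraph

theorem SimpleGraph.Subgraph.ncard_neighborSet_inter_le {V : Type*} {G : SimpleGraph V}
    [DecidableRel G.Adj] (H : G.Subgraph) (v : V) (s : Finset V) :
    (H.neighborSet v ∩ s).ncard ≤ #{u ∈ s | G.Adj v u} := by
  rw [← Set.ncard_coe_finset, coe_filter]
  exact Set.ncard_le_ncard (fun u hu => ⟨hu.2, H.adj_sub hu.1⟩) (Set.toFinite _)

theorem Nat.choose_le_exp_one_mul_div_pow (N k : ℕ) :
    (N.choose k : ℝ) ≤ (exp 1 * N / k) ^ k := by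
  rcases k.eq_zero_or_pos with rfl | hk
  · simp
  have hk' : (0 : ℝ) < k := by exact_mod_cast hk
  -- `k ^ k / k ! ≤ e ^ k` is one term of the series of `exp k`
  have hfact : (k : ℝ) ^ k / k.factorial ≤ exp 1 ^ k := by
    rw [← exp_nat_mul, mul_one]
    exact pow_div_factorial_le_exp _ hk'.le k
  calc (N.choose k : ℝ) ≤ (N : ℝ) ^ k / k.factorial := Nat.choose_le_pow_div k N
    _ = (N / k : ℝ) ^ k * ((k : ℝ) ^ k / k.factorial) := by
        rw [← mul_div_assoc, div_pow, div_mul_cancel₀ _ (by positivity)]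
    _ ≤ (N / k : ℝ) ^ k * exp 1 ^ k := by gcongr
    _ = (exp 1 * N / k) ^ k := by rw [← mul_pow]; ring

theorem Finset.sum_pow_card_le_exp_sub_one {ι : Type*} [Fintype ι] {A : Finset (Finset ι)}
    (hA : ∀ S ∈ A, S.Nonempty) {y : ℝ} (hy : 0 ≤ y) :
    ∑ S ∈ A, y ^ #S ≤ exp (Fintype.card ι * y) - 1 := by
  classical
  have hsub : A ⊆ univ.erase ∅ := fun S hS =>
    mem_erase.2 ⟨(hA S hS).ne_empty, mem_univ S⟩
  have htotal : ∑ S : Finset ι, y ^ #S = (y + 1) ^ Fintype.card ι := by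
    simpa using Fintype.sum_pow_mul_eq_add_pow ι y 1
  calc ∑ S ∈ A, y ^ #S ≤ ∑ S ∈ univ.erase ∅, y ^ #S :=
        sum_le_sum_of_subset_of_nonneg hsub fun _ _ _ => by positivity
    _ = (y + 1) ^ Fintype.card ι - 1 := by
        rw [← htotal, ← add_sum_erase univ _ (mem_univ ∅)]
        simp
    _ ≤ exp y ^ Fintype.card ι - 1 := by
        gcongr
        linarith [add_one_le_exp y]
    _ = exp (Fintype.card ι * y) - 1 := by rw [← exp_nat_mul]

theorem MeasureTheory.tendsto_measure_nhds_one_of_compl_le {Ω : ℕ → Type*}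
    [∀ n, MeasurableSpace (Ω n)] {μ : ∀ n, Measure (Ω n)} [∀ n, IsProbabilityMeasure (μ n)]
    {s : ∀ n, Set (Ω n)} {ε : ℕ → ℝ} (hε : Tendsto ε atTop (𝓝 0))
    (h : ∀ᶠ n in atTop, μ n (s n)ᶜ ≤ ENNReal.ofReal (ε n)) :
    Tendsto (fun n => μ n (s n)) atTop (𝓝 1) := by
  have hcompl : Tendsto (fun n => μ n (s n)ᶜ) atTop (𝓝 0) :=
    tendsto_of_tendsto_of_tendsto_of_le_of_le' tendsto_const_nhds
      (by simpa using ENNReal.tendsto_ofReal hε) (Eventually.of_forall fun _ => zero_le) h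
  have hlower : ∀ n, 1 - μ n (s n)ᶜ ≤ μ n (s n) := fun n => by
    rw [tsub_le_iff_left]
    calc (1 : ENNReal) = μ n (s n ∪ (s n)ᶜ) := by rw [Set.union_compl_self, measure_univ]
      _ ≤ μ n (s n)ᶜ + μ n (s n) := by rw [add_comm]; exact measure_union_le _ _
  have hsub := ENNReal.Tendsto.sub tendsto_const_nhds hcompl (Or.inl ENNReal.one_ne_top)
  rw [tsub_zero] at hsub
  exact tendsto_of_tendsto_of_tendsto_of_le_of_le hsub tendsto_const_nhds hlower
    fun n => prob_le_one

namespace MonochromaticTrees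

theorem choose_sq_mul_pow_le (s D : ℕ) {p L : ℝ} (hs : 1 ≤ s) (hp : 0 ≤ p)
    (hsp : s * p ≤ 100) (hL : 250 ≤ L) (hD : 10 * L ≤ D) :
    ((s ^ 2).choose (s * D / 2) : ℝ) * p ^ (s * D / 2) ≤ exp (-(3 * L)) ^ s := by
  set k := s * D / 2
  have hD2500 : 2500 ≤ D := by exact_mod_cast (by linarith : (2500 : ℝ) ≤ D)
  have hsD : s * D ≤ 3 * k := by
    have : D ≤ s * D := Nat.le_mul_of_pos_left D hs
    omega
  have hsD' : (s : ℝ) * D ≤ 3 * k := by exact_mod_cast hsD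
  have hs' : (1 : ℝ) ≤ s := by exact_mod_cast hs
  have hk : (0 : ℝ) < k := by nlinarith
  have he : exp 1 ^ 2 < 8 := by nlinarith [exp_one_lt_d9, exp_pos 1]
  -- each of the `k` chosen edges costs a factor `e s² p / k ≤ 3 e (s p) / D ≤ 1 / e`
  have hratio : exp 1 * s ^ 2 / k * p ≤ exp (-1) := by
    rw [exp_neg, div_mul_eq_mul_div, div_le_iff₀ hk, ← div_eq_inv_mul, le_div_iff₀ (exp_pos 1)]
    nlinarith [mul_le_mul_of_nonneg_left hsp (by positivity : (0 : ℝ) ≤ exp 1 ^ 2 * s)]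
  calc ((s ^ 2).choose k : ℝ) * p ^ k ≤ (exp 1 * (s ^ 2 : ℕ) / k) ^ k * p ^ k := by
        gcongr
        exact Nat.choose_le_exp_one_mul_div_pow _ _
    _ = (exp 1 * s ^ 2 / k * p) ^ k := by push_cast; rw [mul_pow]
    _ ≤ exp (-1) ^ k := by gcongr
    _ = exp (-k) := by rw [← exp_nat_mul]; ring_nf
    _ ≤ exp (-(3 * L * s)) := by gcongr; nlinarith
    _ = exp (-(3 * L)) ^ s := by rw [← exp_nat_mul]; ring_nf

theorem tendsto_natCast_mul_exp_neg_three_mul_log :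
    Tendsto (fun n : ℕ => (n : ℝ) * exp (-(3 * log n))) atTop (𝓝 0) := by
  have hlog : Tendsto (fun n : ℕ => log n) atTop atTop :=
    tendsto_log_atTop.comp tendsto_natCast_atTop_atTop
  refine (tendsto_exp_atBot.comp (hlog.const_mul_atTop_of_neg (by norm_num : (-2 : ℝ) < 0)))
    |>.congr' ?_
  filter_upwards [eventually_ge_atTop 1] with n hn
  have hn' : (0 : ℝ) < n := by exact_mod_cast hn
  calc exp (-2 * log n) = exp (log n) * exp (-(3 * log n)) := by rw [← exp_add]; ring_nf
    _ = n * exp (-(3 * log n)) := by rw [exp_log hn']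

instance (n : ℕ) (p : ℝ) : IsProbabilityMeasure (gnp n p) := by
  unfold gnp
  infer_instance

instance {n : ℕ} (ω : Sym2 (Fin n) → Bool) : DecidableRel (graphOf ω).Adj := fun u v =>
  decidable_of_iff (ω s(u, v) = true ∧ u ≠ v) (by simp [graphOf])

theorem gnp_setOf_forall_mem_eq_true {n : ℕ} {p : ℝ} (hp : p ≤ 1) (T : Finset (Sym2 (Fin n))) :
    gnp n p {ω | ∀ e ∈ T, ω e = true} = ENNReal.ofReal p ^ #T := by
  classical
  have hcyl : {ω : Sym2 (Fin n) → Bool | ∀ e ∈ T, ω e = true} =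
      Set.univ.pi fun e => if e ∈ T then {true} else Set.univ := by
    ext ω
    simp only [Set.mem_ofPred_eq, Set.mem_pi, Set.mem_univ, true_implies]
    refine forall_congr' fun e => ?_
    split_ifs <;> simp [*]
  have hp' : min p.toNNReal 1 = p.toNNReal := min_eq_left (by simpa using hp)
  have hsum : (p.toNNReal : ENNReal) + (1 - p.toNNReal) = 1 :=
    add_tsub_cancel_of_le (by exact_mod_cast hp'.symm.trans_le (min_le_right _ _))
  rw [gnp, hcyl, Measure.pi_pi]
  simp [apply_ite, PMF.bernoulli_apply, hp', hsum, prod_ite_mem]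
  rfl

theorem gnp_setOf_le_card_filter_le {n : ℕ} {p : ℝ} (hp : p ≤ 1) (E : Finset (Sym2 (Fin n)))
    (k : ℕ) : gnp n p {ω | k ≤ #{e ∈ E | ω e = true}} ≤ (#E).choose k * ENNReal.ofReal p ^ k := by
  have hcover : {ω : Sym2 (Fin n) → Bool | k ≤ #{e ∈ E | ω e = true}} ⊆
      ⋃ T ∈ E.powersetCard k, {ω | ∀ e ∈ T, ω e = true} := fun ω hω => by
    obtain ⟨T, hT, hTk⟩ := exists_subset_card_eq hω
    exact Set.mem_biUnion (mem_powersetCard.2 ⟨hT.trans (filter_subset _ _), hTk⟩)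
      fun e he => (mem_filter.1 (hT he)).2
  calc gnp n p {ω | k ≤ #{e ∈ E | ω e = true}}
      ≤ ∑ T ∈ E.powersetCard k, gnp n p {ω | ∀ e ∈ T, ω e = true} :=
        (measure_mono hcover).trans (measure_biUnion_finset_le _ _)
    _ = (#E).choose k * ENNReal.ofReal p ^ k := by
        rw [sum_congr rfl fun T hT => by
          rw [gnp_setOf_forall_mem_eq_true hp, (mem_powersetCard.1 hT).2]]
        rw [sum_const, card_powersetCard, nsmul_eq_mul]

theorem gnp_minDegree_le {n : ℕ} {p : ℝ} (hp : p ≤ 1) (S : Finset (Fin n)) (D : ℕ) :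
    gnp n p {ω | ∀ v ∈ S, D ≤ #{u ∈ S | (graphOf ω).Adj v u}} ≤
      (#S ^ 2).choose (#S * D / 2) * ENNReal.ofReal p ^ (#S * D / 2) := by
  have hedges : ∀ ω : Sym2 (Fin n) → Bool, {e ∈ S.sym2 | e ∈ (graphOf ω).edgeSet} ⊆
      {e ∈ S.sym2 | ω e = true} := fun ω e => by
    simp +contextual [graphOf]
  have hsym2 : #S.sym2 ≤ #S ^ 2 := by
    rw [card_sym2, Nat.choose_two_right, Nat.add_sub_cancel]
    exact Nat.div_le_of_le_mul (by nlinarith)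
  calc gnp n p {ω | ∀ v ∈ S, D ≤ #{u ∈ S | (graphOf ω).Adj v u}}
      ≤ gnp n p {ω | #S * D / 2 ≤ #{e ∈ S.sym2 | ω e = true}} := by
        refine measure_mono fun ω hω => ?_
        have hmany := (graphOf ω).card_mul_le_two_mul_card_edges_within hω
        have hpresent := card_le_card (hedges ω)
        show #S * D / 2 ≤ _
        omega
    _ ≤ (#S.sym2).choose (#S * D / 2) * ENNReal.ofReal p ^ (#S * D / 2) :=
        gnp_setOf_le_card_filter_le hp _ _
    _ ≤ _ := by gcongr

theorem gnp_minDegree_le_exp {n : ℕ} {p L : ℝ} (hp : 0 ≤ p ∧ p ≤ 1) {S : Finset (Fin n)}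
    (hS : S.Nonempty) (hSp : (#S : ℝ) ≤ 100 / p) {D : ℕ} (hL : 250 ≤ L) (hD : 10 * L ≤ D) :
    gnp n p {ω | ∀ v ∈ S, D ≤ #{u ∈ S | (graphOf ω).Adj v u}} ≤
      ENNReal.ofReal (exp (-(3 * L)) ^ #S) := by
  refine (gnp_minDegree_le hp.2 S D).trans ?_
  rw [← ENNReal.ofReal_natCast, ← ENNReal.ofReal_pow hp.1, ← ENNReal.ofReal_mul (by positivity)]
  exact ENNReal.ofReal_le_ofReal <| choose_sq_mul_pow_le _ _ hS.card_pos hp.1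
    (mul_le_of_le_div₀ (by norm_num) hp.1 hSp) hL hD

theorem compl_setOf_degenerate_subset (n : ℕ) (N x : ℝ) :
    {ω : Sym2 (Fin n) → Bool | ∀ H : (graphOf ω).Subgraph, (H.verts.ncard : ℝ) ≤ N →
        ∀ S ⊆ H.verts, S.Nonempty → ∃ v ∈ S, ((H.neighborSet v ∩ S).ncard : ℝ) ≤ x}ᶜ ⊆
      ⋃ S ∈ ({S | S.Nonempty ∧ (#S : ℝ) ≤ N} : Finset (Finset (Fin n))),
        {ω | ∀ v ∈ S, ⌈x⌉₊ ≤ #{u ∈ S | (graphOf ω).Adj v u}} := by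
  intro ω hω
  simp only [Set.mem_compl_iff, Set.mem_ofPred_eq] at hω
  push Not at hω
  obtain ⟨H, hH, S, hSH, hS, hdeg⟩ := hω
  have hSfin := S.toFinite
  refine Set.mem_biUnion (x := hSfin.toFinset) ?_ fun v hv => ?_
  · rw [mem_coe, mem_filter, ← Set.ncard_eq_toFinset_card S hSfin]
    exact ⟨mem_univ _, hSfin.toFinset_nonempty.2 hS,
      le_trans (by exact_mod_cast Set.ncard_le_ncard hSH) hH⟩
  · rw [Set.Finite.mem_toFinset] at hv
    have hinner := H.ncard_neighborSet_inter_le v hSfin.toFinset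
    rw [Set.Finite.coe_toFinset] at hinner
    exact (Nat.ceil_le.2 (hdeg v hv).le).trans hinner

theorem stmt_8_general (p : ℕ → ℝ) (hp : ∀ n, 0 ≤ p n ∧ p n ≤ 1) :
    Tendsto (fun n : ℕ => gnp n (p n)
      {ω | ∀ H : (graphOf ω).Subgraph, (H.verts.ncard : ℝ) ≤ 100 / p n →
              ∀ S ⊆ H.verts, S.Nonempty →
                ∃ v ∈ S, ((H.neighborSet v ∩ S).ncard : ℝ) ≤ 10 * Real.log n})
      atTop (𝓝 1) := by
  refine tendsto_measure_nhds_one_of_compl_le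
    (ε := fun n : ℕ => exp (n * exp (-(3 * log n))) - 1) ?_ ?_
  · simpa using
      ((continuous_exp.tendsto 0).comp tendsto_natCast_mul_exp_neg_three_mul_log).sub_const 1
  have hlog : ∀ᶠ n : ℕ in atTop, 250 ≤ log n :=
    (tendsto_log_atTop.comp tendsto_natCast_atTop_atTop).eventually_ge_atTop 250
  filter_upwards [hlog] with n hn
  set A : Finset (Finset (Fin n)) := {S | S.Nonempty ∧ (#S : ℝ) ≤ 100 / p n}
  calc _ ≤ ∑ S ∈ A, gnp n (p n) {ω | ∀ v ∈ S, ⌈10 * log n⌉₊ ≤ #{u ∈ S | (graphOf ω).Adj v u}} :=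
        (measure_mono (compl_setOf_degenerate_subset n _ _)).trans (measure_biUnion_finset_le _ _)
    _ ≤ ∑ S ∈ A, ENNReal.ofReal (exp (-(3 * log n)) ^ #S) := by
        refine sum_le_sum fun S hS => ?_
        rw [mem_filter] at hS
        exact gnp_minDegree_le_exp (hp n) hS.2.1 hS.2.2 hn (Nat.le_ceil _)
    _ ≤ ENNReal.ofReal (exp (n * exp (-(3 * log n))) - 1) := by
        rw [← ENNReal.ofReal_sum_of_nonneg fun _ _ => by positivity]
        refine ENNReal.ofReal_le_ofReal ?_
        simpa using sum_pow_card_le_exp_sub_one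
          (fun (S : Finset (Fin n)) hS => (mem_filter.1 hS).2.1) (exp_pos (-(3 * log n))).le

/-- If `p ≫ ((log n)/n)^{1/2}`, then a.a.s. every subgraph
`H ⊆ G` on at most `100/p` vertices is `10 log n`-degenerate, i.e. every
non-empty induced part of it contains a vertex of degree at most `10 log n`. -/
theorem stmt_8 (p : ℕ → ℝ) (hp : ∀ n, 0 ≤ p n ∧ p n ≤ 1)
    (hgrow : Tendsto (fun n : ℕ => p n / Real.sqrt (Real.log n / n)) atTop atTop) :
    Tendsto (fun n : ℕ => gnp n (p n)
      {ω | ∀ H : (graphOf ω).Subgraph, (H.verts.ncard : ℝ) ≤ 100 / p n →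
              ∀ S ⊆ H.verts, S.Nonempty →
                ∃ v ∈ S, ((H.neighborSet v ∩ S).ncard : ℝ) ≤ 10 * Real.log n})
      atTop (𝓝 1) :=
  stmt_8_general p hp

end MonochromaticTrees
end

section
/- Let n ∈ ℕ, let 0 < p ≤ 1, and let G be a graph on n vertices such that for every vertex v and all disjoint subsets U ⊆ V(G) and W ⊆ N_G(v) with |U| ≥ 100/p and |W| ≥ pn/100 one has e_G(U,W) > p|U||W|/2. Then for every vertex v ∈ V(G) and every J ⊆ N_G(v) with |J| ≥ pn/100, at most 100/p vertices x ∈ V(G) \ J satisfy |N_G(x) ∩ J| ≤ p²n/200. -/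
open MeasureTheory Filter Topology SimpleGraph

namespace MonochromaticTrees

variable {V : Type*} {C : Type*}

/-! If more than `100/p` vertices outside `J` had at most `p²n/200` neighbours in `J`, let `U` be
the set of them. Counting the edges between `U` and `J` from the side of `U` gives
`e(U, J) ≤ |U| p²n/200 ≤ p|U||J|/2`, since `|J| ≥ pn/100`; this contradicts the expansion
hypothesis applied to `U` and `W = J`. -/

theorem edgesBetween_le_sum_ncard_neighborSet_inter [Fintype V] (G : SimpleGraph V)
    (U W : Set V) [DecidablePred (· ∈ U)] :
    edgesBetween G U W ≤ ∑ u ∈ U.toFinset, (G.neighborSet u ∩ W).ncard := by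
  classical
  let S := U.toFinset.sigma fun u => (G.neighborSet u ∩ W).toFinset
  have hsub : {e ∈ G.edgeSet | ∃ u ∈ U, ∃ w ∈ W, e = s(u, w)} ⊆
      ↑(S.image fun q => s(q.1, q.2)) := by
    rintro _ ⟨he, u, hu, w, hw, rfl⟩
    refine Finset.mem_coe.2 (Finset.mem_image.2 ⟨⟨u, w⟩, Finset.mem_sigma.2 ⟨?_, ?_⟩, rfl⟩)
    · simpa using hu
    · simpa using ⟨he, hw⟩
  calc edgesBetween G U W ≤ (S.image fun q => s(q.1, q.2)).card :=
        (Set.ncard_le_ncard hsub).trans (Set.ncard_coe_finset _).le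
    _ ≤ S.card := Finset.card_image_le
    _ = _ := by simp only [S, Finset.card_sigma, Set.ncard_eq_toFinset_card']

theorem edgesBetween_le_ncard_mul [Finite V] (G : SimpleGraph V) {U W : Set V} {d : ℝ}
    (hd : ∀ u ∈ U, ((G.neighborSet u ∩ W).ncard : ℝ) ≤ d) :
    (edgesBetween G U W : ℝ) ≤ U.ncard * d := by
  classical
  have := Fintype.ofFinite V
  calc (edgesBetween G U W : ℝ) ≤ ∑ u ∈ U.toFinset, ((G.neighborSet u ∩ W).ncard : ℝ) := by
        exact_mod_cast edgesBetween_le_sum_ncard_neighborSet_inter G U W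
    _ ≤ U.toFinset.card • d := Finset.sum_le_card_nsmul _ _ _ fun u hu => hd u (by simpa using hu)
    _ = U.ncard * d := by rw [nsmul_eq_mul, Set.ncard_eq_toFinset_card']

theorem stmt_9_general (n : ℕ) (p : ℝ) (hp0 : 0 < p) (G : SimpleGraph (Fin n))
    (hexp : ∀ v : Fin n, ∀ U W : Set (Fin n), Disjoint U W → W ⊆ G.neighborSet v →
      100 / p ≤ (U.ncard : ℝ) → p * n / 100 ≤ (W.ncard : ℝ) →
      p * U.ncard * W.ncard / 2 < (edgesBetween G U W : ℝ)) :
    ∀ v : Fin n, ∀ J ⊆ G.neighborSet v, p * n / 100 ≤ (J.ncard : ℝ) →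
      (({x : Fin n | x ∉ J ∧ ((G.neighborSet x ∩ J).ncard : ℝ) ≤ p ^ 2 * n / 200}).ncard : ℝ)
        ≤ 100 / p := by
  intro v J hJv hJcard
  set X := {x : Fin n | x ∉ J ∧ ((G.neighborSet x ∩ J).ncard : ℝ) ≤ p ^ 2 * n / 200}
  by_contra! hX
  have hlower := hexp v X J (Set.disjoint_left.2 fun _ hx => hx.1) hJv hX.le hJcard
  have hupper := edgesBetween_le_ncard_mul G (U := X) fun _ hx => hx.2
  have hcompare : (X.ncard : ℝ) * (p ^ 2 * n / 200) ≤ p * X.ncard * J.ncard / 2 := by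
    nlinarith [mul_le_mul_of_nonneg_left hJcard (by positivity : (0 : ℝ) ≤ p * X.ncard / 2)]
  linarith

/-- Deterministic implication: the expansion property of
Lemma 2.1 (ii) implies the covering property of Lemma 2.1 (iii). -/
theorem stmt_9 (n : ℕ) (p : ℝ) (hp0 : 0 < p) (hp1 : p ≤ 1) (G : SimpleGraph (Fin n))
    (hexp : ∀ v : Fin n, ∀ U W : Set (Fin n), Disjoint U W → W ⊆ G.neighborSet v →
      100 / p ≤ (U.ncard : ℝ) → p * n / 100 ≤ (W.ncard : ℝ) →
      p * U.ncard * W.ncard / 2 < (edgesBetween G U W : ℝ)) :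
    ∀ v : Fin n, ∀ J ⊆ G.neighborSet v, p * n / 100 ≤ (J.ncard : ℝ) →
      (({x : Fin n | x ∉ J ∧ ((G.neighborSet x ∩ J).ncard : ℝ) ≤ p ^ 2 * n / 200}).ncard : ℝ)
        ≤ 100 / p :=
  stmt_9_general n p hp0 G hexp

end MonochromaticTrees
end

section
/- Let n ∈ ℕ, let p > 0 and ε > 0, and let G be a graph on n vertices such that 2 e_G(U) < p|U|² + ε p n |U| for every non-empty subset U ⊆ V(G), where e_G(U) denotes the number of edges of G with both endpoints in U. Then every non-empty subgraph H ⊆ G with minimum degree δ(H) ≥ (1/2 + ε)pn is connected; moreover, every connected component of such an H has more than n/2 vertices. -/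
open MeasureTheory Filter Topology SimpleGraph

namespace MonochromaticTrees

variable {V : Type*} {C : Type*}

/-!
Let `U` be the vertex set of a connected component of `H`. Every vertex of `U` keeps all of its
`H`-neighbours inside `U`, so summing degrees gives
`|U| (1/2 + ε) p n ≤ 2 e_G(U) < p |U|² + ε p n |U|`, that is `|U| > n / 2`.
Two disjoint components cannot both have more than `n / 2` vertices, so `H` is connected.
-/

section

variable {G : SimpleGraph V}

lemma edgesWithin_eq_card_edgeFinset_induce [Fintype V] [DecidableRel G.Adj] (U : Set V)
    [DecidablePred (· ∈ U)] : edgesWithin G U = (G.induce U).edgeFinset.card := by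
  classical
  rw [← Finset.card_map, map_edgeFinset_induce, edgesWithin, ← Set.ncard_coe_finset]
  congr 1
  ext e
  induction e using Sym2.ind
  simp

lemma degree_induce_eq_ncard [Fintype V] [DecidableRel G.Adj] (U : Set V)
    [DecidablePred (· ∈ U)] (v : U) : (G.induce U).degree v = (G.neighborSet v ∩ U).ncard := by
  classical
  rw [← card_neighborFinset_eq_degree, ← Finset.card_map, map_neighborFinset_induce,
    ← Set.ncard_coe_finset]
  simp

lemma ncard_mul_le_two_mul_edgesWithin [Finite V] {U : Set V} {d : ℝ}
    (hd : ∀ v ∈ U, d ≤ (G.neighborSet v ∩ U).ncard) :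
    U.ncard * d ≤ 2 * (edgesWithin G U : ℝ) := by
  classical
  have := Fintype.ofFinite V
  calc U.ncard * d = ∑ _v : U, d := by simp [Set.ncard_eq_toFinset_card']
    _ ≤ ∑ v : U, ((G.induce U).degree v : ℝ) :=
      Finset.sum_le_sum fun v _ => by rw [degree_induce_eq_ncard]; exact hd v v.2
    _ = 2 * (edgesWithin G U : ℝ) := by
      rw [edgesWithin_eq_card_edgeFinset_induce]
      exact_mod_cast sum_degrees_eq_twice_card_edges _

lemma ncard_neighborSet_le_ncard_inter_supp [Finite V] {H : G.Subgraph}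
    {C : H.coe.ConnectedComponent} {v : V} (hv : v ∈ Subtype.val '' C.supp) :
    (H.neighborSet v).ncard ≤ (G.neighborSet v ∩ Subtype.val '' C.supp).ncard :=
  Set.ncard_le_ncard fun _ hw =>
    ⟨H.adj_sub hw, ConnectedComponent.mem_coe_supp_of_adj hv hw.snd_mem hw⟩

lemma half_lt_ncard_supp_of_edgesWithin_lt [Finite V] {p ε n : ℝ} (hp : 0 < p)
    (hG : ∀ U : Set V, U.Nonempty →
      2 * (edgesWithin G U : ℝ) < p * U.ncard ^ 2 + ε * p * n * U.ncard)
    {H : G.Subgraph} (hH : ∀ v ∈ H.verts, (1 / 2 + ε) * p * n ≤ ((H.neighborSet v).ncard : ℝ))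
    (C : H.coe.ConnectedComponent) : n / 2 < C.supp.ncard := by
  set U : Set V := Subtype.val '' C.supp
  have hUcard : U.ncard = C.supp.ncard := Set.ncard_image_of_injective _ Subtype.val_injective
  have hUpos : (0 : ℝ) < U.ncard := by
    exact_mod_cast (Set.ncard_pos (Set.toFinite U)).mpr (C.nonempty_supp.image _)
  have hdeg : ∀ v ∈ U, (1 / 2 + ε) * p * n ≤ (G.neighborSet v ∩ U).ncard := by
    rintro _ ⟨v, hvC, rfl⟩
    exact (hH v v.2).trans <| by
      exact_mod_cast ncard_neighborSet_le_ncard_inter_supp ⟨v, hvC, rfl⟩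
  have hlower := ncard_mul_le_two_mul_edgesWithin hdeg
  have hupper := hG U (C.nonempty_supp.image _)
  rw [← hUcard]
  nlinarith [mul_pos hp hUpos]

lemma connected_of_forall_card_lt_two_mul_ncard_supp {W : Type*} [Finite W] [Nonempty W]
    {K : SimpleGraph W} (h : ∀ C : K.ConnectedComponent, Nat.card W < 2 * C.supp.ncard) :
    K.Connected := by
  refine ⟨fun x y => ?_⟩
  by_contra hxy
  set Cx := K.connectedComponentMk x
  set Cy := K.connectedComponentMk y
  have hdisj : Disjoint Cx.supp Cy.supp :=
    K.pairwise_disjoint_supp_connectedComponent fun hC => hxy (ConnectedComponent.exact hC)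
  have hunion := Set.ncard_union_eq hdisj
  have hle := (Cx.supp ∪ Cy.supp).ncard_le_card
  have hx := h Cx
  have hy := h Cy
  omega

end

theorem stmt_12_general (n : ℕ) (p ε : ℝ) (hp : 0 < p) (G : SimpleGraph (Fin n))
    (hU : ∀ U : Set (Fin n), U.Nonempty →
      2 * (edgesWithin G U : ℝ) < p * U.ncard ^ 2 + ε * p * n * U.ncard) :
    ∀ H : G.Subgraph, H.verts.Nonempty →
      (∀ v ∈ H.verts, (1 / 2 + ε) * p * n ≤ ((H.neighborSet v).ncard : ℝ)) →
      H.coe.Connected ∧ ∀ C : H.coe.ConnectedComponent, (n : ℝ) / 2 < (C.supp.ncard : ℝ) := by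
  intro H hne hdeg
  have hlarge := half_lt_ncard_supp_of_edgesWithin_lt hp hU hdeg
  refine ⟨?_, hlarge⟩
  have := hne.to_subtype
  refine connected_of_forall_card_lt_two_mul_ncard_supp fun C => ?_
  have hcard : (Nat.card H.verts : ℝ) ≤ n := by
    simpa [Nat.card_coe_set_eq] using H.verts.ncard_le_card
  have := hlarge C
  exact_mod_cast (by linarith : (Nat.card H.verts : ℝ) < 2 * C.supp.ncard)

/-- Deterministic implication: if `2e(U) < p|U|² + εpn|U|`
for every non-empty `U`, then every non-empty subgraph `H` of minimum degree
at least `(1/2 + ε)pn` is connected, and each of its components has more than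
`n/2` vertices. -/
theorem stmt_12 (n : ℕ) (p ε : ℝ) (hp : 0 < p) (hε : 0 < ε) (G : SimpleGraph (Fin n))
    (hU : ∀ U : Set (Fin n), U.Nonempty →
      2 * (edgesWithin G U : ℝ) < p * U.ncard ^ 2 + ε * p * n * U.ncard) :
    ∀ H : G.Subgraph, H.verts.Nonempty →
      (∀ v ∈ H.verts, (1 / 2 + ε) * p * n ≤ ((H.neighborSet v).ncard : ℝ)) →
      H.coe.Connected ∧ ∀ C : H.coe.ConnectedComponent, (n : ℝ) / 2 < (C.supp.ncard : ℝ) :=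
  stmt_12_general n p ε hp G hU

end MonochromaticTrees
end

section
/- Let G = (V, E) be a graph with no isolated vertices and let φ : E → {red, blue} be a 2-colouring such that R^φ ≠ ∅, B^φ ≠ ∅, and every two distinct vertices r ∈ R^φ and b ∈ B^φ are connected in G by a monochromatic path. Then either φ → Π₂, or there exist a connected component C_red of the graph (V, φ^{-1}(red)) and a connected component C_blue of the graph (V, φ^{-1}(blue)) such that V(C_red) ∪ V(C_blue) = V. -/
/-!
Every vertex lies in `R^φ ∪ B^φ`. If some `x` lies in both, every vertex is joined to `x` by a
monochromatic path, so the red and the blue component of `x` cover `V`. Otherwise `R^φ` and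
`B^φ` partition `V`, and any `r ∈ R^φ`, `b ∈ B^φ` share a red or a blue component. Fix such a
pair `a`, `b` sharing, say, the red component `C`. A vertex outside `C` lies in the blue
component of `b` if it is in `R^φ`, and in that of `a` if it is in `B^φ`. Unless `C` together
with one of these two blue components covers `V`, there are vertices outside `C` on both sides,
and they force every vertex of `C` into one of the two blue components as well; these are then
distinct and partition `V`, and spanning trees of them give `φ → Π₂`.
-/

open MeasureTheory Filter Topology SimpleGraph

namespace MonochromaticTrees

variable {V : Type*} {C : Type*}

section Fibres

variable {ι α β : Type*} {f : ι → α} {g : ι → β} {X : Set ι}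

/-- Read `f` and `g` as the red and the blue component of a vertex, and `X` as `R^φ`. -/
lemma exists_two_fibres_cover_of_left_eq (h : ∀ x ∈ X, ∀ y ∉ X, f x = f y ∨ g x = g y)
    {a b : ι} (ha : a ∈ X) (hb : b ∉ X) (hab : f a = f b) :
    (∃ A B, ∀ v, f v = A ∨ g v = B) ∨ ∃ B B', B ≠ B' ∧ ∀ v, g v = B ∨ g v = B' := by
  have g_of_mem : ∀ v ∈ X, f v ≠ f a → g v = g b := fun v hv hfv =>
    (h v hv b hb).resolve_left (hab ▸ hfv)
  have g_of_notMem : ∀ v ∉ X, f v ≠ f a → g v = g a := fun v hv hfv =>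
    ((h a ha v hv).resolve_left (Ne.symm hfv)).symm
  by_cases hg : g a = g b
  · refine Or.inl ⟨f a, g a, fun v => or_iff_not_imp_left.mpr fun hfv => ?_⟩
    by_cases hv : v ∈ X
    · exact (g_of_mem v hv hfv).trans hg.symm
    · exact g_of_notMem v hv hfv
  by_cases hX : ∀ x ∈ X, f x = f a
  · refine Or.inl ⟨f a, g a, fun v => or_iff_not_imp_left.mpr fun hfv => ?_⟩
    exact g_of_notMem v (fun hv => hfv (hX v hv)) hfv
  by_cases hY : ∀ y ∉ X, f y = f a
  · refine Or.inl ⟨f a, g b, fun v => or_iff_not_imp_left.mpr fun hfv => ?_⟩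
    exact g_of_mem v (by_contra fun hv => hfv (hY v hv)) hfv
  push Not at hX hY
  obtain ⟨x, hx, hfx⟩ := hX
  obtain ⟨y, hy, hfy⟩ := hY
  -- A vertex of `f`-label `f a` is joined across the split to `x` or `y`, which lack that label.
  refine Or.inr ⟨g a, g b, hg, fun v => ?_⟩
  by_cases hv : v ∈ X <;> by_cases hfv : f v = f a
  · exact Or.inl (((h v hv y hy).resolve_left (hfv ▸ Ne.symm hfy)).trans (g_of_notMem y hy hfy))
  · exact Or.inr (g_of_mem v hv hfv)
  · exact Or.inr ((((h x hx v hv).resolve_left (hfv ▸ hfx)).symm).trans (g_of_mem x hx hfx))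
  · exact Or.inl (g_of_notMem v hv hfv)

lemma exists_two_fibres_cover (h : ∀ x ∈ X, ∀ y ∉ X, f x = f y ∨ g x = g y)
    {a b : ι} (ha : a ∈ X) (hb : b ∉ X) :
    (∃ A B, ∀ v, f v = A ∨ g v = B) ∨ (∃ A A', A ≠ A' ∧ ∀ v, f v = A ∨ f v = A') ∨
      ∃ B B', B ≠ B' ∧ ∀ v, g v = B ∨ g v = B' := by
  rcases h a ha b hb with hf | hg
  · exact (exists_two_fibres_cover_of_left_eq h ha hb hf).imp id Or.inr
  · rcases exists_two_fibres_cover_of_left_eq (f := g) (g := f)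
      (fun x hx y hy => (h x hx y hy).symm) ha hb hg with ⟨B, A, hAB⟩ | hf
    · exact Or.inl ⟨A, B, fun v => (hAB v).symm⟩
    · exact Or.inr (Or.inl hf)

end Fibres

lemma _root_.SimpleGraph.ConnectedComponent.exists_subgraph_isTree {G H : SimpleGraph V}
    (hHG : H ≤ G) (C : H.ConnectedComponent) :
    ∃ T : G.Subgraph, T.verts = C.supp ∧ T.coe.IsTree ∧ T.edgeSet ⊆ H.edgeSet := by
  obtain ⟨F, hFH, hF, hreach⟩ := H.exists_isAcyclic_reachable_eq_le
  obtain ⟨v, rfl⟩ := C.exists_rep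
  have hsupp : (H.connectedComponentMk v).supp = (F.connectedComponentMk v).supp := by
    ext w
    simp only [ConnectedComponent.mem_supp_iff, ConnectedComponent.eq, hreach]
  set T := (toSubgraph F (hFH.trans hHG)).induce (F.connectedComponentMk v).supp
  have hT : T.coe = (F.connectedComponentMk v).toSimpleGraph := by
    ext ⟨u, hu⟩ ⟨w, hw⟩
    exact ⟨fun h => h.2.2, fun h => ⟨hu, hw, h⟩⟩
  refine ⟨T, hsupp.symm, ⟨hT ▸ ConnectedComponent.connected_toSimpleGraph _, hT ▸ hF.induce _⟩, ?_⟩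
  intro e he
  induction e using Sym2.ind with
  | _ u w => exact hFH (Subgraph.mem_edgeSet.mp he).2.2

section Colouring

variable {G : SimpleGraph V} {φ : Sym2 V → Bool} {c : Bool}

lemma mem_edgeSet_colourGraph {e : Sym2 V} :
    e ∈ (colourGraph G φ c).edgeSet ↔ e ∈ G.edgeSet ∧ φ e = c := by
  rw [colourGraph, edgeSet_fromEdgeSet]
  exact ⟨fun h => h.1, fun h => ⟨h, G.not_isDiag_of_mem_edgeSet h.1⟩⟩

lemma colourGraph_adj {u v : V} : (colourGraph G φ c).Adj u v ↔ G.Adj u v ∧ φ s(u, v) = c := by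
  rw [← mem_edgeSet, mem_edgeSet_colourGraph, mem_edgeSet]

lemma colourGraph_le : colourGraph G φ c ≤ G := fun _ _ h => (colourGraph_adj.mp h).1

lemma MonoPath.exists_reachable_colourGraph {u v : V} (h : MonoPath G φ u v) :
    ∃ c, (colourGraph G φ c).Reachable u v := by
  obtain ⟨w, -, c, hc⟩ := h
  exact ⟨c, ⟨w.transfer _ fun e he =>
    mem_edgeSet_colourGraph.mpr ⟨w.edges_subset_edgeSet he, hc e he⟩⟩⟩

/-- Without isolated vertices, `d_red(v) + d_blue(v) = d(v) > 0` forces one of the two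
colour degrees above `d(v)/3`. -/
lemma mem_bigColourSet_true_or_false [Fintype V] {v : V} (hv : (G.neighborSet v).Nonempty) :
    v ∈ bigColourSet G φ true ∨ v ∈ bigColourSet G φ false := by
  have hsplit : G.neighborSet v =
      (colourGraph G φ true).neighborSet v ∪ (colourGraph G φ false).neighborSet v := by
    ext u
    cases hu : φ s(v, u) <;> simp [colourGraph_adj, hu]
  have hdisj : Disjoint ((colourGraph G φ true).neighborSet v)
      ((colourGraph G φ false).neighborSet v) :=
    Set.disjoint_left.mpr fun u ht hf => by
      simp only [mem_neighborSet, colourGraph_adj] at ht hf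
      simp [ht.2] at hf
  have hdeg := Set.ncard_union_eq hdisj (Set.toFinite _) (Set.toFinite _)
  rw [← hsplit] at hdeg
  have hpos := (Set.ncard_pos (Set.toFinite _)).mpr hv
  simp only [bigColourSet, Set.mem_ofPred_eq]
  omega

lemma exists_isMonoTree_verts_eq_supp (D : (colourGraph G φ c).ConnectedComponent) :
    ∃ T : G.Subgraph, IsMonoTree G φ T ∧ T.verts = D.supp := by
  obtain ⟨T, hverts, htree, hedges⟩ := D.exists_subgraph_isTree colourGraph_le
  exact ⟨T, ⟨Or.inr htree, c, fun e he => (mem_edgeSet_colourGraph.mp (hedges he)).2⟩, hverts⟩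

lemma monoTreePartition2_of_forall_eq_or_eq {D₁ D₂ : (colourGraph G φ c).ConnectedComponent}
    (hne : D₁ ≠ D₂) (hcover : ∀ v, (colourGraph G φ c).connectedComponentMk v = D₁ ∨
      (colourGraph G φ c).connectedComponentMk v = D₂) :
    MonoTreePartition2 G φ := by
  obtain ⟨T₁, hT₁, hverts₁⟩ := exists_isMonoTree_verts_eq_supp D₁
  obtain ⟨T₂, hT₂, hverts₂⟩ := exists_isMonoTree_verts_eq_supp D₂
  refine ⟨T₁, T₂, hT₁, hT₂, ?_, ?_⟩ <;> rw [hverts₁, hverts₂]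
  · exact pairwise_disjoint_supp_connectedComponent _ hne
  · exact Set.eq_univ_of_forall hcover

end Colouring

/-- If `G` has no isolated vertices, `R^φ` and `B^φ` are
non-empty, and all distinct `r ∈ R^φ`, `b ∈ B^φ` are joined by monochromatic
paths, then either `φ → Π₂`, or a red component and a blue component together
cover all vertices. -/
theorem stmt_15 {V : Type*} [Fintype V] (G : SimpleGraph V) (φ : Sym2 V → Bool)
    (hiso : ∀ v : V, (G.neighborSet v).Nonempty)
    (hR : (bigColourSet G φ true).Nonempty) (hB : (bigColourSet G φ false).Nonempty)
    (hpath : ∀ r ∈ bigColourSet G φ true, ∀ b ∈ bigColourSet G φ false,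
      r ≠ b → MonoPath G φ r b) :
    MonoTreePartition2 G φ ∨
      ∃ (Cr : (colourGraph G φ true).ConnectedComponent)
        (Cb : (colourGraph G φ false).ConnectedComponent),
        Cr.supp ∪ Cb.supp = Set.univ := by
  set red := (colourGraph G φ true).connectedComponentMk
  set blue := (colourGraph G φ false).connectedComponentMk
  have hRB v : v ∈ bigColourSet G φ true ∨ v ∈ bigColourSet G φ false :=
    mem_bigColourSet_true_or_false (hiso v)
  have hrel : ∀ r ∈ bigColourSet G φ true, ∀ b ∈ bigColourSet G φ false, r ≠ b →
      red r = red b ∨ blue r = blue b := by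
    intro r hr b hb hne
    obtain ⟨_ | _, hc⟩ := (hpath r hr b hb hne).exists_reachable_colourGraph
    exacts [Or.inr (ConnectedComponent.sound hc), Or.inl (ConnectedComponent.sound hc)]
  by_cases hinter : ∃ x ∈ bigColourSet G φ true, x ∈ bigColourSet G φ false
  · obtain ⟨x, hxR, hxB⟩ := hinter
    refine Or.inr ⟨red x, blue x, Set.eq_univ_of_forall fun v => ?_⟩
    rcases eq_or_ne v x with rfl | hvx
    · exact Or.inl rfl
    rcases hRB v with hv | hv
    · exact hrel v hv x hxB hvx
    · exact (hrel x hxR v hv hvx.symm).imp Eq.symm Eq.symm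
  push Not at hinter
  obtain ⟨r, hr⟩ := hR
  obtain ⟨b, hb⟩ := hB
  have hcross : ∀ x ∈ bigColourSet G φ true, ∀ y ∉ bigColourSet G φ true,
      red x = red y ∨ blue x = blue y := fun x hx y hy =>
    hrel x hx y ((hRB y).resolve_left hy) (ne_of_mem_of_not_mem hx hy)
  rcases exists_two_fibres_cover hcross hr (hinter b · hb) with
    ⟨A, B, hcover⟩ | ⟨A, A', hne, hcover⟩ | ⟨B, B', hne, hcover⟩
  · exact Or.inr ⟨A, B, Set.eq_univ_of_forall hcover⟩
  · exact Or.inl (monoTreePartition2_of_forall_eq_or_eq hne hcover)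
  · exact Or.inl (monoTreePartition2_of_forall_eq_or_eq hne hcover)

end MonochromaticTrees
end

section
/- Let G = (V, E) be a graph containing four pairwise non-adjacent vertices r, b, g, z with N(r) ∩ N(b) ∩ N(g) ∩ N(z) = ∅. Then there exists a 3-colouring φ of E such that there is no partition of V into the vertex sets of three monochromatic trees; in particular G does not satisfy G → Π₃. -/
open MeasureTheory Filter Topology SimpleGraph

namespace MonochromaticTrees

variable {V : Type*} {C : Type*}

/-!
Give each of the four special vertices `s i` its own label `i`, and give every other vertex `v`
a label in each colour: row `m v` of `quadCode`, where `s (m v)` is a special vertex not adjacent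
to `v`. Colour an edge by a colour in which its endpoints carry the same label. The rows of
`quadCode` pairwise agree somewhere and row `m` takes every value other than `m`, so this is
possible for every edge. A monochromatic tree then carries a single label in its colour, hence
contains at most one special vertex, and three trees cannot cover four special vertices.
-/

section CodeColouring

variable {V C α : Type*}

noncomputable def codeColouring [Nonempty C] (f : V → C → α) (e : Sym2 V) : C :=
  Classical.epsilon fun c => ∀ x ∈ e, ∀ y ∈ e, f x c = f y c

lemma codeColouring_spec [Nonempty C] {f : V → C → α} {x y : V} (h : ∃ c, f x c = f y c) :
    f x (codeColouring f s(x, y)) = f y (codeColouring f s(x, y)) := by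
  have hsym : ∃ c, ∀ u ∈ s(x, y), ∀ v ∈ s(x, y), f u c = f v c := by
    obtain ⟨c, hc⟩ := h
    refine ⟨c, fun u hu v hv => ?_⟩
    rcases Sym2.mem_iff.mp hu with rfl | rfl <;> rcases Sym2.mem_iff.mp hv with rfl | rfl <;>
      simp [hc]
  exact Classical.epsilon_spec hsym x (Sym2.mem_mk_left x y) y (Sym2.mem_mk_right x y)

variable {G : SimpleGraph V} {φ : Sym2 V → C} {f : V → C → α}

lemma IsMonoTree.exists_eq_of_mem
    (hφ : ∀ x y, G.Adj x y → f x (φ s(x, y)) = f y (φ s(x, y)))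
    {T : G.Subgraph} (hT : IsMonoTree G φ T) {u v : V} (hu : u ∈ T.verts) (hv : v ∈ T.verts) :
    ∃ c, f u c = f v c := by
  obtain ⟨htree | htree, c, hc⟩ := hT
  · simp [htree] at hu
  have hconst (w : T.verts) (hw : Relation.ReflTransGen T.coe.Adj ⟨u, hu⟩ w) : f u c = f w c := by
    induction hw with
    | refl => rfl
    | tail _ hadj ih =>
      have hadj : T.Adj _ _ := hadj
      exact ih.trans (hc _ (T.mem_edgeSet.mpr hadj) ▸ hφ _ _ (T.adj_sub hadj))
  exact ⟨c, hconst ⟨v, hv⟩ <|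
    (reachable_iff_reflTransGen _ _).mp (htree.connected.preconnected ⟨u, hu⟩ ⟨v, hv⟩)⟩

theorem not_monoTreePartitionR_of_labels {r : ℕ} {ι : Type*} [Fintype ι]
    (hcard : r < Fintype.card ι) {φ : Sym2 V → Fin r} {f : V → Fin r → α}
    (hφ : ∀ x y, G.Adj x y → f x (φ s(x, y)) = f y (φ s(x, y)))
    (s : ι → V) (hs : ∀ i j c, f (s i) c = f (s j) c → i = j) :
    ¬ MonoTreePartitionR G r φ := by
  rintro ⟨T, hT, -, hcover⟩
  have hmem (i : ι) : ∃ t, s i ∈ (T t).verts := Set.mem_iUnion.mp (hcover ▸ Set.mem_univ _)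
  choose tree htree using hmem
  obtain ⟨i, j, hij, heq⟩ := Fintype.exists_ne_map_eq_of_card_lt tree (by simpa using hcard)
  obtain ⟨c, hc⟩ := (hT (tree i)).exists_eq_of_mem hφ (htree i) (heq ▸ htree j)
  exact hij (hs i j c hc)

end CodeColouring

section FourSpecialVertices

def quadCode : Fin 4 → Fin 3 → Fin 4 := ![![1, 2, 3], ![0, 2, 3], ![0, 1, 3], ![0, 2, 1]]

lemma quadCode_exists_eq (i j : Fin 4) : ∃ c, quadCode i c = quadCode j c := by
  revert i j; decide

lemma quadCode_exists_eq_of_ne {i j : Fin 4} (hij : i ≠ j) : ∃ c, quadCode i c = j := by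
  revert i j; decide

variable {V : Type*} {G : SimpleGraph V} {s : Fin 4 → V} {m : V → Fin 4}

open Classical in
noncomputable def specialLabel (s : Fin 4 → V) (m : V → Fin 4) (v : V) : Fin 3 → Fin 4 :=
  if h : ∃ i, s i = v then fun _ => h.choose else quadCode (m v)

lemma specialLabel_apply_special (hs : Function.Injective s) (i : Fin 4) :
    specialLabel s m (s i) = fun _ => i := by
  have h : ∃ j, s j = s i := ⟨i, rfl⟩
  rw [specialLabel, dif_pos h, hs h.choose_spec]

lemma specialLabel_of_not_special {v : V} (hv : ¬ ∃ i, s i = v) :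
    specialLabel s m v = quadCode (m v) := by
  rw [specialLabel, dif_neg hv]

lemma specialLabel_exists_eq_of_adj (hs : Function.Injective s)
    (hs_adj : ∀ i j, ¬ G.Adj (s i) (s j)) (hm : ∀ v, ¬ G.Adj v (s (m v))) {x y : V}
    (hxy : G.Adj x y) : ∃ c, specialLabel s m x c = specialLabel s m y c := by
  have special_nonspecial {i : Fin 4} {v : V} (hadj : G.Adj (s i) v) (hv : ¬ ∃ j, s j = v) :
      ∃ c, specialLabel s m (s i) c = specialLabel s m v c := by
    have hmi : m v ≠ i := fun h => hm v (h ▸ hadj.symm)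
    obtain ⟨c, hc⟩ := quadCode_exists_eq_of_ne hmi
    exact ⟨c, by rw [specialLabel_apply_special hs, specialLabel_of_not_special hv, hc]⟩
  by_cases hx : ∃ i, s i = x <;> by_cases hy : ∃ j, s j = y
  · obtain ⟨i, rfl⟩ := hx
    obtain ⟨j, rfl⟩ := hy
    exact absurd hxy (hs_adj i j)
  · obtain ⟨i, rfl⟩ := hx
    exact special_nonspecial hxy hy
  · obtain ⟨j, rfl⟩ := hy
    obtain ⟨c, hc⟩ := special_nonspecial hxy.symm hx
    exact ⟨c, hc.symm⟩
  · rw [specialLabel_of_not_special hx, specialLabel_of_not_special hy]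
    exact quadCode_exists_eq _ _

theorem exists_not_monoTreePartitionR_three (hs : Function.Injective s)
    (hs_adj : ∀ i j, ¬ G.Adj (s i) (s j)) (hN : ∀ v, ∃ i, ¬ G.Adj v (s i)) :
    ∃ φ : Sym2 V → Fin 3, ¬ MonoTreePartitionR G 3 φ := by
  choose m hm using hN
  refine ⟨codeColouring (specialLabel s m),
    not_monoTreePartitionR_of_labels (by simp) (fun x y hxy => codeColouring_spec
      (specialLabel_exists_eq_of_adj hs hs_adj hm hxy)) s fun i j c h => ?_⟩
  simpa [specialLabel_apply_special hs] using h

end FourSpecialVertices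

theorem stmt_19_general {V : Type*} (G : SimpleGraph V) (r b g z : V)
    (hrb : r ≠ b) (hrg : r ≠ g) (hrz : r ≠ z) (hbg : b ≠ g) (hbz : b ≠ z) (hgz : g ≠ z)
    (hrb' : ¬ G.Adj r b) (hrg' : ¬ G.Adj r g) (hrz' : ¬ G.Adj r z)
    (hbg' : ¬ G.Adj b g) (hbz' : ¬ G.Adj b z) (hgz' : ¬ G.Adj g z)
    (hN : G.neighborSet r ∩ G.neighborSet b ∩ G.neighborSet g ∩ G.neighborSet z = ∅) :
    (∃ φ : Sym2 V → Fin 3, ¬ MonoTreePartitionR G 3 φ) ∧ ¬ ArrowPiR G 3 := by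
  obtain ⟨φ, hφ⟩ := exists_not_monoTreePartitionR_three (G := G) (s := ![r, b, g, z])
    (by
      intro i j hij
      fin_cases i <;> fin_cases j <;> simp_all [eq_comm])
    (by
      intro i j
      fin_cases i <;> fin_cases j <;> simp_all [G.adj_comm])
    (fun v => by
      by_contra! hv
      exact hN.subset ⟨⟨⟨(hv 0).symm, (hv 1).symm⟩, (hv 2).symm⟩, (hv 3).symm⟩)
  exact ⟨⟨φ, hφ⟩, fun h => hφ (h φ)⟩

/-- If `G` contains four pairwise non-adjacent vertices
`r, b, g, z` with `N(r) ∩ N(b) ∩ N(g) ∩ N(z) = ∅`, then some 3-colouring of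
the edges admits no partition of the vertex set into three monochromatic
trees; in particular `G ↛ Π₃`. -/
theorem stmt_19 {V : Type*} [Fintype V] (G : SimpleGraph V) (r b g z : V)
    (hrb : r ≠ b) (hrg : r ≠ g) (hrz : r ≠ z) (hbg : b ≠ g) (hbz : b ≠ z) (hgz : g ≠ z)
    (hrb' : ¬ G.Adj r b) (hrg' : ¬ G.Adj r g) (hrz' : ¬ G.Adj r z)
    (hbg' : ¬ G.Adj b g) (hbz' : ¬ G.Adj b z) (hgz' : ¬ G.Adj g z)
    (hN : G.neighborSet r ∩ G.neighborSet b ∩ G.neighborSet g ∩ G.neighborSet z = ∅) :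
    (∃ φ : Sym2 V → Fin 3, ¬ MonoTreePartitionR G 3 φ) ∧ ¬ ArrowPiR G 3 :=
  stmt_19_general G r b g z hrb hrg hrz hbg hbz hgz hrb' hrg' hrz' hbg' hbz' hgz' hN

end MonochromaticTrees
end
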